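/- arXiv:1302.2973 — 11 statements merged into one kernel-verified Lean document; each statement's English description precedes it below -/
import Mathlib

section
/- Let p ∈ ℂⁿ, q† a row vector with q†p ≠ 0, z₀, ζ₀ ∈ ℂ with z* ≠ z₀ and z* ≠ ζ₀, and B = I + ((z₀ − ζ₀)/(z* − z₀))·(p q†)/(q†p). If w is a column vector with q†w ≠ 0 and v = B·w, then q†v ≠ 0 and (z* − z₀)·w/(q†w) + (z₀ − ζ₀)·p/(q†p) + (ζ₀ − z*)·v/(q†v) = 0; that is, (w, p, v) form a q†-based triple with parameters (z* − z₀, z₀ − ζ₀, ζ₀ − z*). Dually, if w† is a row vector with w†p ≠ 0 and v† = w†·B, then v†p ≠ 0 and (z* − z₀)·w†/(w†p) + (z₀ − ζ₀)·q†/(q†p) + (ζ₀ − z*)·v†/(v†p) = 0. -/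
open Matrix

/-!
With `α = z* − z₀`, `β = z₀ − ζ₀`, `γ = ζ₀ − z*` we have `α + β + γ = 0`, and `B` is the rank-one
perturbation `x ↦ x + (β / α) (q†x / q†p) p` of the identity. Hence `q†(Bw) = −(γ / α) q†w`, and
`γ (Bw) / q†(Bw)` expands to `−α w / q†w − β p / q†p`. The statement for row vectors is the same
computation for the functional `x† ↦ x†p` and the perturbation `x† ↦ x† + (β / α) (x†p / q†p) q†`.
-/

section RankOnePerturbation

variable {K V : Type*} [Field K] [AddCommGroup V] [Module K V]

theorem LinearMap.apply_add_smul_of_sum_eq_zero (f : V →ₗ[K] K) {p w : V} (hp : f p ≠ 0)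
    {α β γ : K} (hα : α ≠ 0) (hsum : α + β + γ = 0) :
    f (w + (β / α / f p * f w) • p) = -(γ / α) * f w := by
  rw [map_add, map_smul, smul_eq_mul, eq_neg_add_of_add_eq hsum]
  field_simp
  ring

theorem LinearMap.triple_add_smul_of_sum_eq_zero (f : V →ₗ[K] K) {p w v : V} (hp : f p ≠ 0)
    (hw : f w ≠ 0) {α β γ : K} (hα : α ≠ 0) (hγ : γ ≠ 0) (hsum : α + β + γ = 0)
    (hv : v = w + (β / α / f p * f w) • p) :
    f v ≠ 0 ∧ α • (f w)⁻¹ • w + β • (f p)⁻¹ • p + γ • (f v)⁻¹ • v = 0 := by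
  have hfv : f v = -(γ / α) * f w := hv ▸ f.apply_add_smul_of_sum_eq_zero hp hα hsum
  refine ⟨hfv ▸ mul_ne_zero (neg_ne_zero.mpr (div_ne_zero hγ hα)) hw, ?_⟩
  have hcoef : γ * (f v)⁻¹ = -(α * (f w)⁻¹) := by
    rw [hfv]
    field_simp
  have hcoef' : α * (f w)⁻¹ * (β / α / f p * f w) = β * (f p)⁻¹ := by
    field_simp
  rw [smul_smul, smul_smul, smul_smul, hcoef, hv, neg_smul, smul_add, smul_smul, hcoef']
  abel

end RankOnePerturbation

section RankOneUpdate

variable {ι R : Type*} [Fintype ι] [DecidableEq ι] [CommRing R]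

theorem Matrix.one_add_smul_vecMulVec_mulVec (c : R) (p q w : ι → R) :
    (1 + c • vecMulVec p q) *ᵥ w = w + (c * (q ⬝ᵥ w)) • p := by
  rw [add_mulVec, one_mulVec, smul_mulVec, vecMulVec_mulVec, op_smul_eq_smul, smul_smul]

theorem Matrix.vecMul_one_add_smul_vecMulVec (c : R) (p q w : ι → R) :
    w ᵥ* (1 + c • vecMulVec p q) = w + (c * (w ⬝ᵥ p)) • q := by
  rw [vecMul_add, vecMul_one, vecMul_smul, vecMul_vecMulVec, smul_smul]

end RankOneUpdate

/-- If `v = B·w` then `(w, p, v)` form a `q†`-based triple with parameters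
`(z* − z₀, z₀ − ζ₀, ζ₀ − z*)`; dually for row vectors. -/
theorem elementary_divisor_triple (n : ℕ) (p q : Fin n → ℂ) (hqp : q ⬝ᵥ p ≠ 0)
    (z₀ ζ₀ zs : ℂ) (hz : zs ≠ z₀) (hz' : zs ≠ ζ₀)
    (B : Matrix (Fin n) (Fin n) ℂ)
    (hB : B = 1 + (((z₀ - ζ₀) / (zs - z₀)) / (q ⬝ᵥ p)) • vecMulVec p q)
    (w v : Fin n → ℂ) (hw : q ⬝ᵥ w ≠ 0) (hv : v = B.mulVec w)
    (wd vd : Fin n → ℂ) (hwd : wd ⬝ᵥ p ≠ 0) (hvd : vd = Matrix.vecMul wd B) :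
    q ⬝ᵥ v ≠ 0 ∧
    (zs - z₀) • ((q ⬝ᵥ w)⁻¹ • w) + (z₀ - ζ₀) • ((q ⬝ᵥ p)⁻¹ • p) +
      (ζ₀ - zs) • ((q ⬝ᵥ v)⁻¹ • v) = 0 ∧
    vd ⬝ᵥ p ≠ 0 ∧
    (zs - z₀) • ((wd ⬝ᵥ p)⁻¹ • wd) + (z₀ - ζ₀) • ((q ⬝ᵥ p)⁻¹ • q) +
      (ζ₀ - zs) • ((vd ⬝ᵥ p)⁻¹ • vd) = 0 := by
  have hα : zs - z₀ ≠ 0 := sub_ne_zero.mpr hz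
  have hγ : ζ₀ - zs ≠ 0 := sub_ne_zero.mpr hz'.symm
  have hsum : (zs - z₀) + (z₀ - ζ₀) + (ζ₀ - zs) = 0 := by ring
  have hcol := (dotProductBilin ℂ ℂ q).triple_add_smul_of_sum_eq_zero hqp hw hα hγ hsum
    (hv.trans (hB ▸ one_add_smul_vecMulVec_mulVec _ p q w))
  have hrow := ((dotProductBilin ℂ ℂ).flip p).triple_add_smul_of_sum_eq_zero hqp hwd hα hγ hsum
    (hvd.trans (hB ▸ vecMul_one_add_smul_vecMulVec _ p q wd))
  exact ⟨hcol.1, hcol.2, hrow.1, hrow.2⟩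
end

section
/- Let z₁,…,z_k, ζ₁,…,ζ_k ∈ ℂ be 2k pairwise distinct points, L₀ an invertible n×n complex matrix, a₁,…,a_k, c₁,…,c_k ∈ ℂⁿ column vectors and b₁†,…,b_k†, d₁†,…,d_k† row vectors. Define L(z) = L₀ + Σᵢ aᵢbᵢ†/(z − zᵢ) for z ∉ {z₁,…,z_k} and M(z) = L₀⁻¹ − Σⱼ cⱼdⱼ†/(z − ζⱼ) for z ∉ {ζ₁,…,ζ_k}, and let C be the k×k matrix with entries C_{ik} = (dᵢ†a_k)/(z_k − ζᵢ). Assume C is invertible. Then: (a) if M(z_k)·a_k = 0 for all k = 1,…,k, then cᵢ = Σ_k (L₀⁻¹ a_k)·(C⁻¹)_{ki} for every i; and (b) if dᵢ†·L(ζᵢ) = 0 for all i = 1,…,k, then b_k† = Σᵢ (C⁻¹)_{ki}·(dᵢ† L₀) for every k. -/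
open Matrix

private lemma solve_lin {k n : ℕ} (C : Matrix (Fin k) (Fin k) ℂ) (hCu : IsUnit C)
    (v w : Fin k → Fin n → ℂ) (h : ∀ i, ∑ j, C i j • v j = w i) :
    ∀ j, v j = ∑ i, C⁻¹ j i • w i := by
  intro j
  have hinv : C⁻¹ * C = 1 :=
    Matrix.nonsing_inv_mul C ((Matrix.isUnit_iff_isUnit_det _).mp hCu)
  have : ∑ i, C⁻¹ j i • w i = ∑ l, (C⁻¹ * C) j l • v l := by
    simp_rw [← h, Finset.smul_sum, Matrix.mul_apply, Finset.sum_smul, smul_smul]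
    rw [Finset.sum_comm]
  rw [this, hinv]
  simp [Matrix.one_apply]

/-- Eigenvector coordinates on the space of Lax matrices: the `c` and `b`
vectors are recovered from the `a` and `d` vectors via the inverse of the
Cauchy-like pairing matrix `C = [(dᵢ†a_k)/(z_k − ζᵢ)]`. -/
theorem lax_eigenvector_coordinates (n k : ℕ) (z ζ : Fin k → ℂ)
    (hdist : Function.Injective (Sum.elim z ζ : Fin k ⊕ Fin k → ℂ))
    (L₀ : Matrix (Fin n) (Fin n) ℂ) (hL₀ : IsUnit L₀)
    (a b c d : Fin k → Fin n → ℂ)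
    (C : Matrix (Fin k) (Fin k) ℂ)
    (hC : ∀ i j, C i j = (d i ⬝ᵥ a j) / (z j - ζ i))
    (hCu : IsUnit C) :
    ((∀ i : Fin k,
        (L₀⁻¹ - ∑ j : Fin k, (z i - ζ j)⁻¹ • vecMulVec (c j) (d j)).mulVec (a i)
          = 0) →
      ∀ i : Fin k, c i = ∑ j : Fin k, C⁻¹ j i • L₀⁻¹.mulVec (a j)) ∧
    ((∀ i : Fin k,
        Matrix.vecMul (d i)
          (L₀ + ∑ j : Fin k, (ζ i - z j)⁻¹ • vecMulVec (a j) (b j)) = 0) →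
      ∀ j : Fin k, b j = ∑ i : Fin k, C⁻¹ j i • Matrix.vecMul (d i) L₀) := by
  constructor
  · intro hM
    have key : ∀ i, ∑ j, Cᵀ i j • c j = L₀⁻¹.mulVec (a i) := by
      intro i
      have h := hM i
      rw [Matrix.sub_mulVec, sub_eq_zero] at h
      rw [h]
      funext m
      simp only [Matrix.mulVec, dotProduct, Matrix.sum_apply, Matrix.smul_apply,
        vecMulVec_apply, Finset.sum_apply, Pi.smul_apply, Finset.sum_mul, smul_eq_mul,
        Matrix.transpose_apply, hC]
      rw [Finset.sum_comm]
      apply Finset.sum_congr rfl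
      intro j _
      simp only [div_eq_mul_inv, Finset.sum_mul]
      exact Finset.sum_congr rfl fun l _ => by ring
    have hCtu : IsUnit Cᵀ := by
      rw [Matrix.isUnit_iff_isUnit_det, Matrix.det_transpose,
        ← Matrix.isUnit_iff_isUnit_det]
      exact hCu
    have := solve_lin Cᵀ hCtu c _ key
    intro i
    rw [this i]
    apply Finset.sum_congr rfl
    intro j _
    rw [← Matrix.transpose_nonsing_inv, Matrix.transpose_apply]
  · intro hL
    have key : ∀ i, ∑ j, C i j • b j = Matrix.vecMul (d i) L₀ := by
      intro i
      have h := hL i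
      rw [Matrix.vecMul_add, add_eq_zero_iff_eq_neg] at h
      rw [h]
      funext m
      simp only [Matrix.vecMul, dotProduct, Matrix.sum_apply, Matrix.smul_apply,
        vecMulVec_apply, Finset.sum_apply, Pi.smul_apply, Pi.neg_apply, smul_eq_mul, hC,
        Finset.mul_sum, ← Finset.sum_neg_distrib]
      rw [Finset.sum_comm]
      apply Finset.sum_congr rfl
      intro j _
      have hzz : (z j - ζ i)⁻¹ = -(ζ i - z j)⁻¹ := by
        rw [← inv_neg, neg_sub]
      simp only [div_eq_mul_inv, hzz, Finset.sum_mul]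
      exact Finset.sum_congr rfl fun l _ => by ring
    exact solve_lin C hCu b _ key
end

section
/- Let z₁,…,z_k, ζ₁,…,ζ_k ∈ ℂ be 2k pairwise distinct points, L₀ an invertible n×n complex matrix, and define L(z) = L₀ + Σᵢ aᵢbᵢ†/(z − zᵢ) and M(z) = L₀⁻¹ − Σⱼ cⱼdⱼ†/(z − ζⱼ). Assume L(z)·M(z) = I and M(z)·L(z) = I for all z outside {z₁,…,z_k, ζ₁,…,ζ_k}. Then for each i and each j: if bᵢ ≠ 0 then M(zᵢ)·aᵢ = 0; if aᵢ ≠ 0 then bᵢ†·M(zᵢ) = 0; if dⱼ ≠ 0 then L(ζⱼ)·cⱼ = 0; and if cⱼ ≠ 0 then dⱼ†·L(ζⱼ) = 0. -/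
/-!
Multiplying `L(w) M(w) = 1` by `w - zᵢ` and letting `w → zᵢ`: the factor `(w - zᵢ) L(w)` tends to
the residue `aᵢ bᵢ†`, while `M` is continuous at `zᵢ`, so `aᵢ bᵢ† M(zᵢ) = 0`, i.e. `bᵢ† M(zᵢ) = 0`
once `aᵢ ≠ 0`. Using `M L = 1` instead gives `M(zᵢ) aᵢ bᵢ† = 0`, and exchanging the roles of `L`
and `M` gives the equations at the poles `ζⱼ` of `M`.
-/

open Matrix Filter Topology

theorem tendsto_sub_smul_nhdsNE_zero {E : Type*} [AddCommMonoid E] [Module ℂ E] [TopologicalSpace E]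
    [ContinuousSMul ℂ E] (p : ℂ) (x : E) :
    Tendsto (fun w => (w - p) • x) (𝓝[≠] p) (𝓝 0) := by
  have : ContinuousAt (fun w => (w - p) • x) p := by fun_prop
  simpa using this.tendsto.mono_left nhdsWithin_le_nhds

section AdditiveForm

variable {ι E : Type*} [Fintype ι] [AddCommGroup E] [Module ℂ E] [TopologicalSpace E]
  [IsTopologicalAddGroup E] [ContinuousSMul ℂ E]

theorem continuousAt_of_eq_add_sum_inv_sub_smul {f : ℂ → E} {C : E} {A : ι → E} {z : ι → ℂ}
    (hf : ∀ w, f w = C + ∑ j, (w - z j)⁻¹ • A j) {p : ℂ} (hp : ∀ j, p ≠ z j) :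
    ContinuousAt f p := by
  rw [funext hf]
  fun_prop (disch := exact sub_ne_zero.mpr (hp _))

theorem tendsto_sub_smul_of_eq_add_sum_inv_sub_smul {f : ℂ → E} {C : E} {A : ι → E}
    {z : ι → ℂ} (hf : ∀ w, f w = C + ∑ j, (w - z j)⁻¹ • A j) (hz : Function.Injective z)
    (i : ι) : Tendsto (fun w => (w - z i) • f w) (𝓝[≠] z i) (𝓝 (A i)) := by
  classical
  have hcoeff : ∀ j, Tendsto (fun w => (w - z i) * (w - z j)⁻¹) (𝓝[≠] z i)
      (𝓝 (if j = i then 1 else 0)) := by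
    intro j
    split_ifs with hj
    · subst hj
      refine tendsto_const_nhds.congr' ?_
      filter_upwards [self_mem_nhdsWithin] with w hw
      exact (mul_inv_cancel₀ (sub_ne_zero.mpr hw)).symm
    · have hne : z i - z j ≠ 0 := sub_ne_zero.mpr (hz.ne (Ne.symm hj))
      have : ContinuousAt (fun w => (w - z i) * (w - z j)⁻¹) (z i) := by
        fun_prop (disch := exact hne)
      simpa using this.tendsto.mono_left nhdsWithin_le_nhds
  have hsum := (tendsto_sub_smul_nhdsNE_zero (z i) C).add
    (tendsto_finsetSum Finset.univ fun j _ => (hcoeff j).smul_const (A j))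
  simp only [ite_smul, one_smul, zero_smul, Finset.sum_ite_eq', Finset.mem_univ, if_true,
    zero_add] at hsum
  simpa only [hf, smul_add, Finset.smul_sum, smul_smul] using hsum

end AdditiveForm

section Residue

variable {R : Type*} [Ring R] [Algebra ℂ R] [TopologicalSpace R] [IsTopologicalRing R]
  [ContinuousSMul ℂ R] [T2Space R] {f g : ℂ → R} {p : ℂ} {A : R}

theorem residue_mul_eq_zero (hf : Tendsto (fun w => (w - p) • f w) (𝓝[≠] p) (𝓝 A))
    (hg : ContinuousAt g p) (hfg : ∀ᶠ w in 𝓝[≠] p, f w * g w = 1) : A * g p = 0 := by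
  refine tendsto_nhds_unique (hf.mul (hg.tendsto.mono_left nhdsWithin_le_nhds))
    ((tendsto_sub_smul_nhdsNE_zero p (1 : R)).congr' ?_)
  filter_upwards [hfg] with w hw
  rw [smul_mul_assoc, hw]

theorem mul_residue_eq_zero (hf : Tendsto (fun w => (w - p) • f w) (𝓝[≠] p) (𝓝 A))
    (hg : ContinuousAt g p) (hgf : ∀ᶠ w in 𝓝[≠] p, g w * f w = 1) : g p * A = 0 := by
  refine tendsto_nhds_unique ((hg.tendsto.mono_left nhdsWithin_le_nhds).mul hf)
    ((tendsto_sub_smul_nhdsNE_zero p (1 : R)).congr' ?_)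
  filter_upwards [hgf] with w hw
  rw [mul_smul_comm, hw]

end Residue

namespace Matrix

variable {n α : Type*} [Fintype n] [NonUnitalSemiring α] [NoZeroDivisors α]

theorem vecMul_eq_zero_of_vecMulVec_mul_eq_zero {u v : n → α} {N : Matrix n n α}
    (h : vecMulVec u v * N = 0) (hu : u ≠ 0) : v ᵥ* N = 0 :=
  (vecMulVec_eq_zero.mp (vecMulVec_mul u v N ▸ h)).resolve_left hu

theorem mulVec_eq_zero_of_mul_vecMulVec_eq_zero {u v : n → α} {N : Matrix n n α}
    (h : N * vecMulVec u v = 0) (hv : v ≠ 0) : N *ᵥ u = 0 :=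
  (vecMulVec_eq_zero.mp (mul_vecMulVec N u v ▸ h)).resolve_right hv

end Matrix

theorem eventually_nhdsNE_forall_ne {ι X : Type*} [Finite ι] [TopologicalSpace X] [T1Space X]
    (z : ι → X) (p : X) :
    ∀ᶠ w in 𝓝[≠] p, ∀ i, w ≠ z i :=
  eventually_all.mpr fun i => (nhdsNE_le_cofinite p) (eventually_cofinite_ne (z i))

theorem lax_additive_eigenvector_equations_general (n k : ℕ) (z ζ : Fin k → ℂ)
    (hdist : Function.Injective (Sum.elim z ζ : Fin k ⊕ Fin k → ℂ))
    (L₀ : Matrix (Fin n) (Fin n) ℂ)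
    (a b c d : Fin k → Fin n → ℂ)
    (L M : ℂ → Matrix (Fin n) (Fin n) ℂ)
    (hL : ∀ w : ℂ, L w = L₀ + ∑ i : Fin k, (w - z i)⁻¹ • vecMulVec (a i) (b i))
    (hM : ∀ w : ℂ, M w = L₀⁻¹ - ∑ j : Fin k, (w - ζ j)⁻¹ • vecMulVec (c j) (d j))
    (hinv : ∀ w : ℂ, (∀ i, w ≠ z i) → (∀ j, w ≠ ζ j) →
      L w * M w = 1 ∧ M w * L w = 1) :
    (∀ i, b i ≠ 0 → (M (z i)).mulVec (a i) = 0) ∧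
    (∀ i, a i ≠ 0 → Matrix.vecMul (b i) (M (z i)) = 0) ∧
    (∀ j, d j ≠ 0 → (L (ζ j)).mulVec (c j) = 0) ∧
    (∀ j, c j ≠ 0 → Matrix.vecMul (d j) (L (ζ j)) = 0) := by
  have hz : Function.Injective z := hdist.comp Sum.inl_injective
  have hζ : Function.Injective ζ := hdist.comp Sum.inr_injective
  have hzζ : ∀ i j, z i ≠ ζ j := fun i j => hdist.ne Sum.inl_ne_inr
  have hM' : ∀ w, M w = L₀⁻¹ + ∑ j, (w - ζ j)⁻¹ • -vecMulVec (c j) (d j) := fun w => by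
    simp only [hM, smul_neg, Finset.sum_neg_distrib, sub_eq_add_neg]
  have hL_res := tendsto_sub_smul_of_eq_add_sum_inv_sub_smul hL hz
  have hM_res := tendsto_sub_smul_of_eq_add_sum_inv_sub_smul hM' hζ
  have hL_cont j : ContinuousAt L (ζ j) :=
    continuousAt_of_eq_add_sum_inv_sub_smul hL fun i => (hzζ i j).symm
  have hM_cont i : ContinuousAt M (z i) := continuousAt_of_eq_add_sum_inv_sub_smul hM' (hzζ i)
  have hinv_ev p : ∀ᶠ w in 𝓝[≠] p, L w * M w = 1 ∧ M w * L w = 1 := by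
    filter_upwards [eventually_nhdsNE_forall_ne z p, eventually_nhdsNE_forall_ne ζ p]
      with w hwz hwζ using hinv w hwz hwζ
  refine ⟨fun i hb => ?_, fun i ha => ?_, fun j hd => ?_, fun j hc => ?_⟩
  · exact mulVec_eq_zero_of_mul_vecMulVec_eq_zero
      (mul_residue_eq_zero (hL_res i) (hM_cont i) ((hinv_ev _).mono fun _ h => h.2)) hb
  · exact vecMul_eq_zero_of_vecMulVec_mul_eq_zero
      (residue_mul_eq_zero (hL_res i) (hM_cont i) ((hinv_ev _).mono fun _ h => h.1)) ha
  · refine mulVec_eq_zero_of_mul_vecMulVec_eq_zero (neg_eq_zero.mp ?_) hd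
    rw [← mul_neg]
    exact mul_residue_eq_zero (hM_res j) (hL_cont j) ((hinv_ev _).mono fun _ h => h.1)
  · refine vecMul_eq_zero_of_vecMulVec_mul_eq_zero (neg_eq_zero.mp ?_) hc
    rw [← neg_mul]
    exact residue_mul_eq_zero (hM_res j) (hL_cont j) ((hinv_ev _).mono fun _ h => h.2)

/-- For a rational Lax matrix `L(z)` with inverse `M(z)` in additive form, the
additive eigenvectors satisfy `M(zᵢ)·aᵢ = 0`, `bᵢ†·M(zᵢ) = 0`, `L(ζⱼ)·cⱼ = 0`
and `dⱼ†·L(ζⱼ) = 0`. -/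
theorem lax_additive_eigenvector_equations (n k : ℕ) (z ζ : Fin k → ℂ)
    (hdist : Function.Injective (Sum.elim z ζ : Fin k ⊕ Fin k → ℂ))
    (L₀ : Matrix (Fin n) (Fin n) ℂ) (hL₀ : IsUnit L₀)
    (a b c d : Fin k → Fin n → ℂ)
    (L M : ℂ → Matrix (Fin n) (Fin n) ℂ)
    (hL : ∀ w : ℂ, L w = L₀ + ∑ i : Fin k, (w - z i)⁻¹ • vecMulVec (a i) (b i))
    (hM : ∀ w : ℂ, M w = L₀⁻¹ - ∑ j : Fin k, (w - ζ j)⁻¹ • vecMulVec (c j) (d j))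
    (hinv : ∀ w : ℂ, (∀ i, w ≠ z i) → (∀ j, w ≠ ζ j) →
      L w * M w = 1 ∧ M w * L w = 1) :
    (∀ i, b i ≠ 0 → (M (z i)).mulVec (a i) = 0) ∧
    (∀ i, a i ≠ 0 → Matrix.vecMul (b i) (M (z i)) = 0) ∧
    (∀ j, d j ≠ 0 → (L (ζ j)).mulVec (c j) = 0) ∧
    (∀ j, c j ≠ 0 → Matrix.vecMul (d j) (L (ζ j)) = 0) :=
  lax_additive_eigenvector_equations_general n k z ζ hdist L₀ a b c d L M hL hM hinv
end

section
/- Let z₁, z₂, ζ_α, ζ_β ∈ ℂ be pairwise distinct, L₀ an invertible n×n complex matrix, a₁, a₂, c_β ∈ ℂⁿ and b₁†, b₂†, d_α† row vectors with d_α†a₁ ≠ 0 and b₂†c_β ≠ 0. Define B₁(z) = I + ((z₁ − ζ_α)/(z − z₁))·(L₀⁻¹a₁)(d_α†L₀)/(d_α†a₁) and B₂(z) = I + ((z₂ − ζ_β)/(z − z₂))·(c_β b₂†)/(b₂†c_β), and assume L₀ + a₁b₁†/(z − z₁) + a₂b₂†/(z − z₂) = L₀·B₁(z)·B₂(z) for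 all z ∉ {z₁, z₂}. If a₁ ≠ 0, then b₁† = ((z₁ − ζ_α)/(d_α†a₁))·d_α†·L₀·B₂(z₁); in particular the row vector d_α†·L₀·B₂(z₁) is proportional to b₁†. -/
/-!
Multiplying the factorization by `z - z₁` and letting `z → z₁` compares residues at `z₁`:
on the left only `a₁ b₁†` survives, on the right only the residue of `B₁` does, giving
`a₁ b₁† = ((z₁ - ζ_α)/(d_α†a₁)) · a₁ (d_α† L₀ B₂(z₁))`, and `a₁ ≠ 0` can be cancelled.
-/

open Matrix Filter Topology

theorem tendsto_sub_smul_add_inv_smul {E : Type*} [AddCommGroup E] [Module ℂ E]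
    [TopologicalSpace E] [IsTopologicalAddGroup E] [ContinuousSMul ℂ E]
    {G R : ℂ → E} {p : ℂ} (hG : ContinuousAt G p) (hR : ContinuousAt R p) :
    Tendsto (fun z => (z - p) • (G z + (z - p)⁻¹ • R z)) (𝓝[≠] p) (𝓝 (R p)) := by
  have hcont : ContinuousAt (fun z => (z - p) • G z + R z) p := by fun_prop
  have hlim : Tendsto (fun z => (z - p) • G z + R z) (𝓝 p) (𝓝 (R p)) := by
    simpa using hcont.tendsto
  refine (hlim.mono_left nhdsWithin_le_nhds).congr' ?_
  filter_upwards [self_mem_nhdsWithin] with z hz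
  rw [smul_add, smul_smul, mul_inv_cancel₀ (sub_ne_zero.mpr hz), one_smul]

namespace Matrix

theorem vecMulVec_right_injective {m n α : Type*} [Semiring α] [IsLeftCancelMulZero α]
    {a : m → α} (ha : a ≠ 0) : Function.Injective (vecMulVec a : (n → α) → Matrix m n α) := by
  obtain ⟨i, hi⟩ := Function.ne_iff.mp ha
  exact fun x y h => funext fun j => mul_left_cancel₀ hi congr($h i j)

theorem mul_one_add_smul_vecMulVec_mulVec_mul {n R : Type*} [Fintype n] [DecidableEq n]
    [CommRing R] {L : Matrix n n R} (hL : IsUnit L) (r : R) (a w : n → R) (B : Matrix n n R) :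
    L * (1 + r • vecMulVec (L⁻¹ *ᵥ a) w) * B = L * B + r • vecMulVec a (w ᵥ* B) := by
  rw [mul_add, mul_one, Matrix.mul_smul, mul_vecMulVec, mulVec_mulVec,
    mul_nonsing_inv _ ((isUnit_iff_isUnit_det _).mp hL), one_mulVec, add_mul, Matrix.smul_mul,
    vecMulVec_mul]

end Matrix

theorem quadratic_lax_b₁_relation_general (n : ℕ) (z₁ z₂ ζα ζβ : ℂ)
    (hdist : ([z₁, z₂, ζα, ζβ] : List ℂ).Pairwise (· ≠ ·))
    (L₀ : Matrix (Fin n) (Fin n) ℂ) (hL₀ : IsUnit L₀)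
    (a₁ a₂ cβ b₁ b₂ dα : Fin n → ℂ)
    (hda : dα ⬝ᵥ a₁ ≠ 0)
    (B₁ B₂ : ℂ → Matrix (Fin n) (Fin n) ℂ)
    (hB₁ : ∀ z, B₁ z = 1 + (((z₁ - ζα) / (z - z₁)) / (dα ⬝ᵥ a₁)) •
        vecMulVec (L₀⁻¹.mulVec a₁) (Matrix.vecMul dα L₀))
    (hB₂ : ∀ z, B₂ z = 1 + (((z₂ - ζβ) / (z - z₂)) / (b₂ ⬝ᵥ cβ)) •
        vecMulVec cβ b₂)
    (hfact : ∀ z, z ≠ z₁ → z ≠ z₂ →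
      L₀ + (z - z₁)⁻¹ • vecMulVec a₁ b₁ + (z - z₂)⁻¹ • vecMulVec a₂ b₂ =
        L₀ * B₁ z * B₂ z)
    (ha₁ : a₁ ≠ 0) :
    b₁ = ((z₁ - ζα) / (dα ⬝ᵥ a₁)) •
        Matrix.vecMul (Matrix.vecMul dα L₀) (B₂ z₁) ∧
    ∃ t : ℂ, Matrix.vecMul (Matrix.vecMul dα L₀) (B₂ z₁) = t • b₁ := by
  obtain ⟨⟨h12, h1α, -⟩, -⟩ : (z₁ ≠ z₂ ∧ z₁ ≠ ζα ∧ z₁ ≠ ζβ) ∧ _ := by simpa using hdist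
  have h12' : z₁ - z₂ ≠ 0 := sub_ne_zero.mpr h12
  set c := (z₁ - ζα) / (dα ⬝ᵥ a₁)
  have hRHS (z : ℂ) : L₀ * B₁ z * B₂ z =
      L₀ * B₂ z + (z - z₁)⁻¹ • (c • vecMulVec a₁ (dα ᵥ* L₀ ᵥ* B₂ z)) := by
    rw [hB₁, mul_one_add_smul_vecMulVec_mulVec_mul hL₀, smul_smul]
    congr 2
    ring
  have hB₂z₁ : ContinuousAt B₂ z₁ := by
    rw [funext hB₂]
    fun_prop (disch := exact h12')
  have hres : vecMulVec a₁ b₁ = c • vecMulVec a₁ (dα ᵥ* L₀ ᵥ* B₂ z₁) := by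
    refine tendsto_nhds_unique (Tendsto.congr' ?_ (tendsto_sub_smul_add_inv_smul
        (G := fun z => L₀ + (z - z₂)⁻¹ • vecMulVec a₂ b₂) (R := fun _ => vecMulVec a₁ b₁)
        (by fun_prop (disch := exact h12')) continuousAt_const))
      (tendsto_sub_smul_add_inv_smul (G := fun z => L₀ * B₂ z)
        (R := fun z => c • vecMulVec a₁ (dα ᵥ* L₀ ᵥ* B₂ z)) (by fun_prop) (by fun_prop))
    filter_upwards [self_mem_nhdsWithin, nhdsWithin_le_nhds (eventually_ne_nhds h12)]
      with z hz₁ hz₂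
    rw [← hRHS, ← hfact z hz₁ hz₂, add_right_comm]
  have hb₁ : b₁ = c • (dα ᵥ* L₀ ᵥ* B₂ z₁) :=
    vecMulVec_right_injective ha₁ (hres.trans (vecMulVec_smul _ _ _).symm)
  refine ⟨hb₁, (dα ⬝ᵥ a₁) / (z₁ - ζα), ?_⟩
  rw [hb₁, smul_smul, div_mul_div_cancel₀ (sub_ne_zero.mpr h1α), div_self hda, one_smul]

/-- From the factorization `L(z) = L₀·B₁(z)·B₂(z)` of a quadratic Lax matrix,
the residue at `z₁` gives `b₁† = ((z₁ − ζ_α)/(d_α†a₁))·d_α†L₀B₂(z₁)`; in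
particular `d_α†·L₀·B₂(z₁)` is proportional to `b₁†`. -/
theorem quadratic_lax_b₁_relation (n : ℕ) (z₁ z₂ ζα ζβ : ℂ)
    (hdist : ([z₁, z₂, ζα, ζβ] : List ℂ).Pairwise (· ≠ ·))
    (L₀ : Matrix (Fin n) (Fin n) ℂ) (hL₀ : IsUnit L₀)
    (a₁ a₂ cβ b₁ b₂ dα : Fin n → ℂ)
    (hda : dα ⬝ᵥ a₁ ≠ 0) (hbc : b₂ ⬝ᵥ cβ ≠ 0)
    (B₁ B₂ : ℂ → Matrix (Fin n) (Fin n) ℂ)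
    (hB₁ : ∀ z, B₁ z = 1 + (((z₁ - ζα) / (z - z₁)) / (dα ⬝ᵥ a₁)) •
        vecMulVec (L₀⁻¹.mulVec a₁) (Matrix.vecMul dα L₀))
    (hB₂ : ∀ z, B₂ z = 1 + (((z₂ - ζβ) / (z - z₂)) / (b₂ ⬝ᵥ cβ)) •
        vecMulVec cβ b₂)
    (hfact : ∀ z, z ≠ z₁ → z ≠ z₂ →
      L₀ + (z - z₁)⁻¹ • vecMulVec a₁ b₁ + (z - z₂)⁻¹ • vecMulVec a₂ b₂ =
        L₀ * B₁ z * B₂ z)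
    (ha₁ : a₁ ≠ 0) :
    b₁ = ((z₁ - ζα) / (dα ⬝ᵥ a₁)) •
        Matrix.vecMul (Matrix.vecMul dα L₀) (B₂ z₁) ∧
    ∃ t : ℂ, Matrix.vecMul (Matrix.vecMul dα L₀) (B₂ z₁) = t • b₁ :=
  quadratic_lax_b₁_relation_general n z₁ z₂ ζα ζβ hdist L₀ hL₀ a₁ a₂ cβ b₁ b₂ dα hda B₁ B₂ hB₁ hB₂
    hfact ha₁
end

section
/- Let z₁, z₂, ζ_α, ζ_β ∈ ℂ be pairwise distinct, L₀ an invertible n×n complex matrix, a₁, a₂, c_β ∈ ℂⁿ and b₁†, b₂†, d_α† row vectors with d_α†a₁ ≠ 0 and b₂†c_β ≠ 0. Define B₁(z) = I + ((z₁ − ζ_α)/(z − z₁))·(L₀⁻¹a₁)(d_α†L₀)/(d_α†a₁) and B₂(z) = I + ((z₂ − ζ_β)/(z − z₂))·(c_β b₂†)/(b₂†c_β), and assume L₀ + a₁b₁†/(z − z₁) + a₂b₂†/(z − z₂) = L₀·B₁(z)·B₂(z) for all z ∉ {z₁, z₂}. If b₂† ≠ 0, then a₂ = ((z₂ − ζ_β)/(b₂†c_β))·L₀·B₁(z₂)·c_β;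 in particular B₁(z₂)·c_β is proportional to L₀⁻¹a₂. -/
open Matrix

lemma vecMulVec_mulVec' {n : ℕ} (v w x : Fin n → ℂ) :
    (vecMulVec v w).mulVec x = (w ⬝ᵥ x) • v := by
  ext i
  simp only [vecMulVec, mulVec, dotProduct, Pi.smul_apply, smul_eq_mul, of_apply,
    Finset.sum_mul, Finset.mul_sum]
  exact Finset.sum_congr rfl fun j _ => by ring

/-- From the factorization `L(z) = L₀·B₁(z)·B₂(z)` of a quadratic Lax matrix,
the residue at `z₂` gives `a₂ = ((z₂ − ζ_β)/(b₂†c_β))·L₀·B₁(z₂)·c_β`; in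
particular `B₁(z₂)·c_β` is proportional to `L₀⁻¹a₂`. -/
theorem quadratic_lax_a₂_relation (n : ℕ) (z₁ z₂ ζα ζβ : ℂ)
    (hdist : ([z₁, z₂, ζα, ζβ] : List ℂ).Pairwise (· ≠ ·))
    (L₀ : Matrix (Fin n) (Fin n) ℂ) (hL₀ : IsUnit L₀)
    (a₁ a₂ cβ b₁ b₂ dα : Fin n → ℂ)
    (hda : dα ⬝ᵥ a₁ ≠ 0) (hbc : b₂ ⬝ᵥ cβ ≠ 0)
    (B₁ B₂ : ℂ → Matrix (Fin n) (Fin n) ℂ)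
    (hB₁ : ∀ z, B₁ z = 1 + (((z₁ - ζα) / (z - z₁)) / (dα ⬝ᵥ a₁)) •
        vecMulVec (L₀⁻¹.mulVec a₁) (Matrix.vecMul dα L₀))
    (hB₂ : ∀ z, B₂ z = 1 + (((z₂ - ζβ) / (z - z₂)) / (b₂ ⬝ᵥ cβ)) •
        vecMulVec cβ b₂)
    (hfact : ∀ z, z ≠ z₁ → z ≠ z₂ →
      L₀ + (z - z₁)⁻¹ • vecMulVec a₁ b₁ + (z - z₂)⁻¹ • vecMulVec a₂ b₂ =
        L₀ * B₁ z * B₂ z)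
    (hb₂ : b₂ ≠ 0) :
    a₂ = ((z₂ - ζβ) / (b₂ ⬝ᵥ cβ)) • (L₀ * B₁ z₂).mulVec cβ ∧
    ∃ t : ℂ, (B₁ z₂).mulVec cβ = t • L₀⁻¹.mulVec a₂ := by
  simp only [List.pairwise_cons, List.mem_cons, List.mem_singleton, List.not_mem_nil,
    List.Pairwise.nil] at hdist
  obtain ⟨h1, h2, _⟩ := hdist
  have hz12 : z₁ ≠ z₂ := h1 z₂ (by simp)
  have hz2β : z₂ ≠ ζβ := h2 ζβ (by simp)
  set M₁ : Matrix (Fin n) (Fin n) ℂ :=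
    ((z₁ - ζα) / (dα ⬝ᵥ a₁)) • vecMulVec (L₀⁻¹.mulVec a₁) (Matrix.vecMul dα L₀) with hM₁
  set M₂ : Matrix (Fin n) (Fin n) ℂ := ((z₂ - ζβ) / (b₂ ⬝ᵥ cβ)) • vecMulVec cβ b₂ with hM₂
  have hB₁' : ∀ z, z ≠ z₁ → (z - z₁) • B₁ z = (z - z₁) • (1 : Matrix (Fin n) (Fin n) ℂ) + M₁ := by
    intro z hz
    have hzz : z - z₁ ≠ 0 := sub_ne_zero.2 hz
    rw [hB₁, smul_add, smul_smul, hM₁]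
    congr 2
    field_simp
    all_goals ring
  have hB₂' : ∀ z, z ≠ z₂ → (z - z₂) • B₂ z = (z - z₂) • (1 : Matrix (Fin n) (Fin n) ℂ) + M₂ := by
    intro z hz
    have hzz : z - z₂ ≠ 0 := sub_ne_zero.2 hz
    rw [hB₂, smul_add, smul_smul, hM₂]
    congr 2
    field_simp
    all_goals ring
  -- the polynomial identity away from z₁, z₂
  set f : ℂ → Matrix (Fin n) (Fin n) ℂ := fun z =>
    ((z - z₁) * (z - z₂)) • L₀ + (z - z₂) • vecMulVec a₁ b₁ + (z - z₁) • vecMulVec a₂ b₂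
    with hf
  set g : ℂ → Matrix (Fin n) (Fin n) ℂ := fun z =>
    L₀ * ((z - z₁) • (1 : Matrix (Fin n) (Fin n) ℂ) + M₁)
      * ((z - z₂) • (1 : Matrix (Fin n) (Fin n) ℂ) + M₂) with hg
  have key : ∀ z, z ≠ z₁ → z ≠ z₂ → f z = g z := by
    intro z hzA hzB
    have hzz1 : z - z₁ ≠ 0 := sub_ne_zero.2 hzA
    have hzz2 : z - z₂ ≠ 0 := sub_ne_zero.2 hzB
    have h := hfact z hzA hzB
    have h2 : ((z - z₁) * (z - z₂)) •
        (L₀ + (z - z₁)⁻¹ • vecMulVec a₁ b₁ + (z - z₂)⁻¹ • vecMulVec a₂ b₂) =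
        ((z - z₁) * (z - z₂)) • (L₀ * B₁ z * B₂ z) := by rw [h]
    calc f z = ((z - z₁) * (z - z₂)) •
        (L₀ + (z - z₁)⁻¹ • vecMulVec a₁ b₁ + (z - z₂)⁻¹ • vecMulVec a₂ b₂) := by
          rw [hf]
          simp only [smul_add, smul_smul]
          congr 2
          · congr 1
            field_simp
            all_goals ring
          · congr 1
            field_simp
            all_goals ring
      _ = ((z - z₁) * (z - z₂)) • (L₀ * B₁ z * B₂ z) := h2
      _ = L₀ * ((z - z₁) • B₁ z) * ((z - z₂) • B₂ z) := by
          rw [Matrix.mul_smul, Matrix.mul_smul, Matrix.smul_mul, smul_smul, mul_comm (z - z₂)]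
      _ = g z := by rw [hB₁' z hzA, hB₂' z hzB, hg]
  -- extend to all z by continuity
  have hfc : Continuous f := by
    apply Continuous.add
    apply Continuous.add
    · exact (continuous_id.sub continuous_const |>.mul
        (continuous_id.sub continuous_const)).smul continuous_const
    · exact (continuous_id.sub continuous_const).smul continuous_const
    · exact (continuous_id.sub continuous_const).smul continuous_const
  have hgc : Continuous g := by
    apply Continuous.mul
    apply Continuous.mul continuous_const
    · exact ((continuous_id.sub continuous_const).smul continuous_const).add continuous_const
    · exact ((continuous_id.sub continuous_const).smul continuous_const).add continuous_const
  have hdense : Dense (({z₁, z₂} : Set ℂ)ᶜ) :=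
    Set.Countable.dense_compl ℂ (((Set.finite_singleton z₂).insert z₁).countable)
  have hfg : f = g := by
    apply Continuous.ext_on hdense hfc hgc
    intro z hz
    simp only [Set.mem_compl_iff, Set.mem_insert_iff, Set.mem_singleton_iff, not_or] at hz
    exact key z hz.1 hz.2
  have key₂ : f z₂ = g z₂ := by rw [hfg]
  rw [hf, hg] at key₂
  simp only [sub_self, zero_smul, mul_zero, zero_mul, smul_zero, add_zero, zero_add] at key₂
  -- key₂ : (z₂-z₁) • vecMulVec a₂ b₂ = L₀ * ((z₂-z₁) • 1 + M₁) * M₂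
  rw [← hB₁' z₂ (Ne.symm hz12)] at key₂
  have hz21 : z₂ - z₁ ≠ 0 := sub_ne_zero.2 (Ne.symm hz12)
  simp only [hM₂, Matrix.mul_smul, Matrix.smul_mul, smul_smul] at key₂
  rw [mul_comm, ← smul_smul] at key₂
  have key₃ : vecMulVec a₂ b₂ =
      ((z₂ - ζβ) / (b₂ ⬝ᵥ cβ)) • (L₀ * B₁ z₂ * vecMulVec cβ b₂) :=
    smul_right_injective _ hz21 key₂
  have key₄ := congrArg (fun M => M.mulVec cβ) key₃
  simp only [Matrix.smul_mulVec, ← Matrix.mulVec_mulVec, vecMulVec_mulVec',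
    Matrix.mulVec_smul] at key₄
  -- key₄ : (b₂ ⬝ᵥ cβ) • a₂ = ((z₂ - ζβ)/(b₂⬝ᵥcβ)) • (b₂ ⬝ᵥ cβ) • (L₀ * B₁ z₂).mulVec cβ
  have ha₂ : a₂ = ((z₂ - ζβ) / (b₂ ⬝ᵥ cβ)) • (L₀ * B₁ z₂).mulVec cβ := by
    have h5 := congrArg (fun v => (b₂ ⬝ᵥ cβ)⁻¹ • v) key₄
    simp only [smul_smul, inv_mul_cancel₀ hbc, one_smul] at h5
    rw [h5, Matrix.mulVec_mulVec]
    congr 1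
    field_simp
    all_goals ring
  refine ⟨ha₂, ⟨(b₂ ⬝ᵥ cβ) / (z₂ - ζβ), ?_⟩⟩
  have hLinv : L₀⁻¹ * L₀ = 1 := Matrix.nonsing_inv_mul L₀ ((Matrix.isUnit_iff_isUnit_det L₀).1 hL₀)
  have hstep : L₀⁻¹.mulVec a₂ = ((z₂ - ζβ) / (b₂ ⬝ᵥ cβ)) • (B₁ z₂).mulVec cβ := by
    rw [ha₂, Matrix.mulVec_smul, Matrix.mulVec_mulVec, ← Matrix.mul_assoc, hLinv,
      Matrix.one_mul]
  rw [hstep, smul_smul]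
  have hzz : z₂ - ζβ ≠ 0 := sub_ne_zero.2 hz2β
  rw [div_mul_div_comm, mul_comm, div_self (mul_ne_zero hzz hbc), one_smul]
end

section
/- Let z₁, z₂, ζ_α, ζ_β ∈ ℂ be pairwise distinct, L₀ an invertible n×n complex matrix, a₁, a₂, c_α, c_β ∈ ℂⁿ and b₁†, b₂†, d_α†, d_β† row vectors with d_α†a₁ ≠ 0, b₂†c_β ≠ 0 and b₂† ≠ 0. Define L(z) = L₀ + a₁b₁†/(z − z₁) + a₂b₂†/(z − z₂), M(z) = L₀⁻¹ − c_αd_α†/(z − ζ_α) − c_βd_β†/(z − ζ_β), B₁(z) = I + ((z₁ − ζ_α)/(z − z₁))·(L₀⁻¹a₁)(d_α†L₀)/(d_α†a₁), B₂(z) = I + ((z₂ − ζ_β)/(z − z₂))·(c_β b₂†)/(b₂†c_β). Assume L(z) = L₀·B₁(z)·B₂(z) for all z ∉ {z₁, z₂}, and L(z)·M(z) = M(z)·L(z) = I for all z ∉ {z₁, z₂, ζ_α, ζ_β}. If c_β ≠ 0, then there exists t ∈ ℂ such that d_β†·L₀·B₁(ζ_β) = t·b₂†; that is, d_β†·L₀·B₁(ζ_β)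 is proportional to b₂†. -/
open Matrix Filter Topology

/-!
Near `ζ_β` we have `M = N - (z - ζ_β)⁻¹ • c_β d_β†` with `N` regular, so multiplying `M L = 1`
by `z - ζ_β` and letting `z → ζ_β` gives `c_β (d_β† L(ζ_β)) = 0`, hence `d_β† L(ζ_β) = 0`.
Since `L(ζ_β) = L₀ B₁(ζ_β) B₂(ζ_β)`, the row vector `w = d_β† L₀ B₁(ζ_β)` is killed by
`B₂(ζ_β) = 1 + s c_β b₂†`, which forces `w = -s (w c_β) b₂†`.
-/

theorem eq_zero_of_eventuallyEq_sub_smul {𝕜 E : Type*} [NontriviallyNormedField 𝕜]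
    [TopologicalSpace E] [T2Space E] [AddCommGroup E] [Module 𝕜 E] [ContinuousSMul 𝕜 E]
    {f g : 𝕜 → E} {a : 𝕜} (hf : ContinuousAt f a) (hg : ContinuousAt g a)
    (h : f =ᶠ[𝓝[≠] a] fun z => (z - a) • g z) : f a = 0 := by
  have hlim : Tendsto (fun z => (z - a) • g z) (𝓝[≠] a) (𝓝 ((a - a) • g a)) :=
    ((continuousAt_id.sub continuousAt_const).smul hg).tendsto.mono_left nhdsWithin_le_nhds
  rw [sub_self, zero_smul] at hlim
  exact tendsto_nhds_unique_of_eventuallyEq (hf.tendsto.mono_left nhdsWithin_le_nhds) hlim h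

theorem mul_eq_zero_of_eventually_sub_inv_smul_mul_eq_one {𝕜 A : Type*}
    [NontriviallyNormedField 𝕜] [Ring A] [Algebra 𝕜 A] [TopologicalSpace A] [T2Space A]
    [IsTopologicalRing A] [ContinuousSMul 𝕜 A]
    {N L : 𝕜 → A} {R : A} {a : 𝕜} (hN : ContinuousAt N a) (hL : ContinuousAt L a)
    (h : ∀ᶠ z in 𝓝[≠] a, (N z - (z - a)⁻¹ • R) * L z = 1) : R * L a = 0 := by
  refine eq_zero_of_eventuallyEq_sub_smul (f := fun z => R * L z) (g := fun z => N z * L z - 1)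
    (continuousAt_const.mul hL) ((hN.mul hL).sub continuousAt_const) ?_
  filter_upwards [h, self_mem_nhdsWithin] with z hz hz_ne
  have hza : z - a ≠ 0 := sub_ne_zero.mpr hz_ne
  rw [← hz, sub_mul, sub_sub_cancel, smul_mul_assoc, smul_smul, mul_inv_cancel₀ hza, one_smul]

theorem eq_smul_of_vecMul_one_add_smul_vecMulVec_eq_zero {R n : Type*} [CommRing R] [Fintype n]
    [DecidableEq n] {w c b : n → R} {s : R} (h : w ᵥ* (1 + s • vecMulVec c b) = 0) :
    w = (-(s * (w ⬝ᵥ c))) • b := by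
  rw [vecMul_add, vecMul_one, vecMul_smul, vecMul_vecMulVec, smul_smul] at h
  rw [neg_smul]
  exact eq_neg_of_add_eq_zero_left h

theorem quadratic_lax_dβ_relation_general (n : ℕ) (z₁ z₂ ζα ζβ : ℂ)
    (hdist : ([z₁, z₂, ζα, ζβ] : List ℂ).Pairwise (· ≠ ·))
    (L₀ : Matrix (Fin n) (Fin n) ℂ)
    (a₁ a₂ cα cβ b₁ b₂ dα dβ : Fin n → ℂ)
    (L M : ℂ → Matrix (Fin n) (Fin n) ℂ)
    (hL : ∀ z, L z = L₀ + (z - z₁)⁻¹ • vecMulVec a₁ b₁ +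
        (z - z₂)⁻¹ • vecMulVec a₂ b₂)
    (hM : ∀ z, M z = L₀⁻¹ - (z - ζα)⁻¹ • vecMulVec cα dα -
        (z - ζβ)⁻¹ • vecMulVec cβ dβ)
    (B₁ B₂ : ℂ → Matrix (Fin n) (Fin n) ℂ)
    (hB₂ : ∀ z, B₂ z = 1 + (((z₂ - ζβ) / (z - z₂)) / (b₂ ⬝ᵥ cβ)) •
        vecMulVec cβ b₂)
    (hfact : ∀ z, z ≠ z₁ → z ≠ z₂ → L z = L₀ * B₁ z * B₂ z)
    (hinv : ∀ z, z ≠ z₁ → z ≠ z₂ → z ≠ ζα → z ≠ ζβ →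
      L z * M z = 1 ∧ M z * L z = 1)
    (hcβ : cβ ≠ 0) :
    ∃ t : ℂ, Matrix.vecMul (Matrix.vecMul dβ L₀) (B₁ ζβ) = t • b₂ := by
  obtain ⟨hβ1, hβ2, hβα⟩ : ζβ ≠ z₁ ∧ ζβ ≠ z₂ ∧ ζβ ≠ ζα := by
    simp only [List.pairwise_cons, List.mem_cons, List.not_mem_nil] at hdist
    grind
  have hLcont : ContinuousAt L ζβ := by
    rw [funext hL]
    fun_prop (disch := exact sub_ne_zero.mpr ‹_›)
  have hres : vecMulVec cβ dβ * L ζβ = 0 := by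
    refine mul_eq_zero_of_eventually_sub_inv_smul_mul_eq_one
      (N := fun z => L₀⁻¹ - (z - ζα)⁻¹ • vecMulVec cα dα)
      (by fun_prop (disch := exact sub_ne_zero.mpr ‹_›)) hLcont ?_
    filter_upwards [eventually_nhdsWithin_of_eventually_nhds (eventually_ne_nhds hβ1),
      eventually_nhdsWithin_of_eventually_nhds (eventually_ne_nhds hβ2),
      eventually_nhdsWithin_of_eventually_nhds (eventually_ne_nhds hβα),
      self_mem_nhdsWithin] with z hz1 hz2 hzα hzβ
    rw [← hM]
    exact (hinv z hz1 hz2 hzα hzβ).2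
  rw [vecMulVec_mul, vecMulVec_eq_zero] at hres
  have hker := hres.resolve_left hcβ
  rw [hfact ζβ hβ1 hβ2, ← vecMul_vecMul, ← vecMul_vecMul, hB₂] at hker
  exact ⟨_, eq_smul_of_vecMul_one_add_smul_vecMulVec_eq_zero hker⟩

/-- For a quadratic Lax matrix with inverse `M(z)` in additive form and
factorization `L(z) = L₀·B₁(z)·B₂(z)`, one has `d_β†·L₀·B₁(ζ_β) ∼ b₂†`. -/
theorem quadratic_lax_dβ_relation (n : ℕ) (z₁ z₂ ζα ζβ : ℂ)
    (hdist : ([z₁, z₂, ζα, ζβ] : List ℂ).Pairwise (· ≠ ·))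
    (L₀ : Matrix (Fin n) (Fin n) ℂ) (hL₀ : IsUnit L₀)
    (a₁ a₂ cα cβ b₁ b₂ dα dβ : Fin n → ℂ)
    (hda : dα ⬝ᵥ a₁ ≠ 0) (hbc : b₂ ⬝ᵥ cβ ≠ 0) (hb₂ : b₂ ≠ 0)
    (L M : ℂ → Matrix (Fin n) (Fin n) ℂ)
    (hL : ∀ z, L z = L₀ + (z - z₁)⁻¹ • vecMulVec a₁ b₁ +
        (z - z₂)⁻¹ • vecMulVec a₂ b₂)
    (hM : ∀ z, M z = L₀⁻¹ - (z - ζα)⁻¹ • vecMulVec cα dα -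
        (z - ζβ)⁻¹ • vecMulVec cβ dβ)
    (B₁ B₂ : ℂ → Matrix (Fin n) (Fin n) ℂ)
    (hB₁ : ∀ z, B₁ z = 1 + (((z₁ - ζα) / (z - z₁)) / (dα ⬝ᵥ a₁)) •
        vecMulVec (L₀⁻¹.mulVec a₁) (Matrix.vecMul dα L₀))
    (hB₂ : ∀ z, B₂ z = 1 + (((z₂ - ζβ) / (z - z₂)) / (b₂ ⬝ᵥ cβ)) •
        vecMulVec cβ b₂)
    (hfact : ∀ z, z ≠ z₁ → z ≠ z₂ → L z = L₀ * B₁ z * B₂ z)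
    (hinv : ∀ z, z ≠ z₁ → z ≠ z₂ → z ≠ ζα → z ≠ ζβ →
      L z * M z = 1 ∧ M z * L z = 1)
    (hcβ : cβ ≠ 0) :
    ∃ t : ℂ, Matrix.vecMul (Matrix.vecMul dβ L₀) (B₁ ζβ) = t • b₂ :=
  quadratic_lax_dβ_relation_general n z₁ z₂ ζα ζβ hdist L₀ a₁ a₂ cα cβ b₁ b₂ dα dβ L M hL hM B₁ B₂
    hB₂ hfact hinv hcβ
end

section
/- In the Face Lemma setup (p₁, p₂ ∈ ℂⁿ linearly independent column vectors; q₁†, q₂† linearly independent row vectors; qᵢ†pⱼ ≠ 0 for i,j ∈ {1,2}; nonzero α₁, α₂, β₁, β₂ ∈ ℂ with α₁+α₂ ≠ 0, β₁+β₂ ≠ 0, α₁+β₁ ≠ 0; D := α₁β₂(q₂†p₁)(q₁†p₂) − α₂β₁(q₁†p₁)(q₂†p₂) ≠ 0; κ := α₁+α₂+β₁+β₂), define P₁ = (α₁·p₁/(q₁†p₁) + α₂·p₂/(q₁†p₂))/(α₁+α₂), P₂ = (β₁·p₁/(q₂†p₁) + β₂·p₂/(q₂†p₂))/(β₁+β₂),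 Q₁† = (α₁·q₁†/(q₁†p₁) + β₁·q₂†/(q₂†p₁))/(α₁+β₁), and set α₄ = −β₂ + κ·α₁β₂(q₂†p₁)(q₁†p₂)/D, β₄ = −α₂ − κ·α₂β₁(q₁†p₁)(q₂†p₂)/D, γ₁ = −(α₁+β₁). If Q₁†·P₁ ≠ 0 and Q₁†·P₂ ≠ 0, then Q₁†·p₁ = 1 and α₄·P₁/(Q₁†P₁) + β₄·P₂/(Q₁†P₂) + γ₁·p₁ = 0; moreover α₄ + β₄ = α₁ + β₁. -/
open Matrix

/-!
Everything happens in the plane of `p₁, p₂`; write `a = q₁ ⬝ᵥ p₁`, `b = q₁ ⬝ᵥ p₂`,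
`c = q₂ ⬝ᵥ p₁`, `d = q₂ ⬝ᵥ p₂`. Clearing denominators, the normalizations of `P₁` and `P₂`
at `Q₁` are those of `u₁ = (α₁ b) p₁ + (α₂ a) p₂` and `u₂ = (β₁ d) p₁ + (β₂ c) p₂`, and the
formulas for `α₄`, `β₄` say precisely that `α₄ = (α₁ + β₁) β₂ c / D · (Q₁ ⬝ᵥ u₁)` and
`β₄ = -(α₁ + β₁) α₂ a / D · (Q₁ ⬝ᵥ u₂)`. The triple sum is therefore `(α₁ + β₁) / D` times
`β₂ c u₁ - α₂ a u₂ - D p₁`, in which the `p₂`-components cancel and the `p₁`-component is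
`α₁ β₂ b c - α₂ β₁ a d - D = 0`.
-/

section

variable {K : Type*} [Field K]

theorem weighted_inv_smul_eq_inv_smul {V : Type*} [AddCommGroup V] [Module K V] {x y : V}
    {s s' a b : K} (ha : a ≠ 0) (hb : b ≠ 0) :
    (s + s')⁻¹ • (s • (a⁻¹ • x) + s' • (b⁻¹ • y)) =
      ((s + s') * a * b)⁻¹ • ((s * b) • x + (s' * a) • y) := by
  match_scalars <;> field_simp

variable {ι : Type*} [Fintype ι]

theorem dotProduct_weighted_normalize_self {q q' p : ι → K} {s s' : K}
    (hq : q ⬝ᵥ p ≠ 0) (hq' : q' ⬝ᵥ p ≠ 0) (hs : s + s' ≠ 0) :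
    ((s + s')⁻¹ • (s • ((q ⬝ᵥ p)⁻¹ • q) + s' • ((q' ⬝ᵥ p)⁻¹ • q'))) ⬝ᵥ p = 1 := by
  simp only [smul_dotProduct, add_dotProduct, smul_eq_mul, inv_mul_cancel₀ hq,
    inv_mul_cancel₀ hq', mul_one, inv_mul_cancel₀ hs]

theorem inv_dotProduct_smul_smul {Q v : ι → K} {c : K} (hc : c ≠ 0) :
    (Q ⬝ᵥ (c • v))⁻¹ • (c • v) = (Q ⬝ᵥ v)⁻¹ • v := by
  rw [dotProduct_smul, smul_eq_mul, smul_smul, mul_inv, mul_right_comm, inv_mul_cancel₀ hc,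
    one_mul]

theorem smul_inv_dotProduct_smul_weighted {Q x y : ι → K} {s s' a b t k : K}
    (ha : a ≠ 0) (hb : b ≠ 0) (hx : Q ⬝ᵥ x = 1) (hy : Q ⬝ᵥ y = t)
    (hQP : Q ⬝ᵥ ((s + s')⁻¹ • (s • (a⁻¹ • x) + s' • (b⁻¹ • y))) ≠ 0) :
    (k * (s * b + s' * a * t)) •
        ((Q ⬝ᵥ ((s + s')⁻¹ • (s • (a⁻¹ • x) + s' • (b⁻¹ • y))))⁻¹ •
          ((s + s')⁻¹ • (s • (a⁻¹ • x) + s' • (b⁻¹ • y)))) =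
      k • ((s * b) • x + (s' * a) • y) := by
  have hu : Q ⬝ᵥ ((s * b) • x + (s' * a) • y) = s * b + s' * a * t := by
    simp only [dotProduct_add, dotProduct_smul, hx, hy, smul_eq_mul, mul_one]
  rw [weighted_inv_smul_eq_inv_smul ha hb, dotProduct_smul, hu, smul_eq_mul] at hQP
  rw [weighted_inv_smul_eq_inv_smul ha hb, inv_dotProduct_smul_smul (left_ne_zero_of_mul hQP),
    hu, smul_smul, mul_assoc, mul_inv_cancel₀ (right_ne_zero_of_mul hQP), mul_one]

end

theorem face_lemma_node_Q₁_general (n : ℕ) (p₁ p₂ q₁ q₂ : Fin n → ℂ)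
    (h11 : q₁ ⬝ᵥ p₁ ≠ 0) (h12 : q₁ ⬝ᵥ p₂ ≠ 0)
    (h21 : q₂ ⬝ᵥ p₁ ≠ 0) (h22 : q₂ ⬝ᵥ p₂ ≠ 0)
    (α₁ α₂ β₁ β₂ : ℂ)
    (hαβ : α₁ + β₁ ≠ 0)
    (D κ : ℂ)
    (hD : D = α₁ * β₂ * (q₂ ⬝ᵥ p₁) * (q₁ ⬝ᵥ p₂) -
        α₂ * β₁ * (q₁ ⬝ᵥ p₁) * (q₂ ⬝ᵥ p₂))
    (hD0 : D ≠ 0)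
    (hκ : κ = α₁ + α₂ + β₁ + β₂)
    (P₁ P₂ Q₁ : Fin n → ℂ)
    (hP₁ : P₁ = (α₁ + α₂)⁻¹ •
        (α₁ • ((q₁ ⬝ᵥ p₁)⁻¹ • p₁) + α₂ • ((q₁ ⬝ᵥ p₂)⁻¹ • p₂)))
    (hP₂ : P₂ = (β₁ + β₂)⁻¹ •
        (β₁ • ((q₂ ⬝ᵥ p₁)⁻¹ • p₁) + β₂ • ((q₂ ⬝ᵥ p₂)⁻¹ • p₂)))
    (hQ₁ : Q₁ = (α₁ + β₁)⁻¹ •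
        (α₁ • ((q₁ ⬝ᵥ p₁)⁻¹ • q₁) + β₁ • ((q₂ ⬝ᵥ p₁)⁻¹ • q₂)))
    (α₄ β₄ γ₁ : ℂ)
    (hα₄ : α₄ = -β₂ + κ * (α₁ * β₂ * (q₂ ⬝ᵥ p₁) * (q₁ ⬝ᵥ p₂)) / D)
    (hβ₄ : β₄ = -α₂ - κ * (α₂ * β₁ * (q₁ ⬝ᵥ p₁) * (q₂ ⬝ᵥ p₂)) / D)
    (hγ₁ : γ₁ = -(α₁ + β₁))
    (hQP₁ : Q₁ ⬝ᵥ P₁ ≠ 0) (hQP₂ : Q₁ ⬝ᵥ P₂ ≠ 0) :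
    Q₁ ⬝ᵥ p₁ = 1 ∧
    α₄ • ((Q₁ ⬝ᵥ P₁)⁻¹ • P₁) + β₄ • ((Q₁ ⬝ᵥ P₂)⁻¹ • P₂) + γ₁ • p₁ = 0 ∧
    α₄ + β₄ = α₁ + β₁ := by
  set a := q₁ ⬝ᵥ p₁
  set b := q₁ ⬝ᵥ p₂
  set c := q₂ ⬝ᵥ p₁
  set d := q₂ ⬝ᵥ p₂
  set t := (α₁ + β₁)⁻¹ * (α₁ * b / a + β₁ * d / c)
  have hQp₁ : Q₁ ⬝ᵥ p₁ = 1 := hQ₁ ▸ dotProduct_weighted_normalize_self h11 h21 hαβ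
  have hQp₂ : Q₁ ⬝ᵥ p₂ = t := by
    simp only [hQ₁, t, smul_dotProduct, add_dotProduct, smul_eq_mul]
    ring
  have hα₄' : α₄ = (β₂ * c * (α₁ + β₁) / D) * (α₁ * b + α₂ * a * t) := by
    simp only [hα₄, hκ, t]
    field_simp; rw [hD]; ring
  have hβ₄' : β₄ = -(α₂ * a * (α₁ + β₁) / D) * (β₁ * d + β₂ * c * t) := by
    simp only [hβ₄, hκ, t]
    field_simp; rw [hD]; ring
  have hp₁_coeff : (α₁ + β₁) * (β₂ * c * α₁ * b - α₂ * a * β₁ * d) / D = α₁ + β₁ := by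
    field_simp; rw [hD]; ring
  refine ⟨hQp₁, ?_, ?_⟩
  · subst hP₁ hP₂
    rw [hα₄', hβ₄', smul_inv_dotProduct_smul_weighted h11 h12 hQp₁ hQp₂ hQP₁,
      smul_inv_dotProduct_smul_weighted h21 h22 hQp₁ hQp₂ hQP₂, hγ₁]
    linear_combination (norm := module) hp₁_coeff • p₁
  · rw [hα₄, hβ₄, hκ]
    field_simp; rw [hD]; ring

/-- Face Lemma, triple condition at the node `Q₁†`: with `α₄`, `β₄`, `γ₁` as
computed, `(P₁, P₂, p₁)` form a `Q₁†`-based triple with parameters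
`(α₄, β₄, γ₁)`, and `α₄ + β₄ = α₁ + β₁`. -/
theorem face_lemma_node_Q₁ (n : ℕ) (p₁ p₂ q₁ q₂ : Fin n → ℂ)
    (hp : LinearIndependent ℂ ![p₁, p₂]) (hq : LinearIndependent ℂ ![q₁, q₂])
    (h11 : q₁ ⬝ᵥ p₁ ≠ 0) (h12 : q₁ ⬝ᵥ p₂ ≠ 0)
    (h21 : q₂ ⬝ᵥ p₁ ≠ 0) (h22 : q₂ ⬝ᵥ p₂ ≠ 0)
    (α₁ α₂ β₁ β₂ : ℂ) (ha₁ : α₁ ≠ 0) (ha₂ : α₂ ≠ 0) (hb₁ : β₁ ≠ 0) (hb₂ : β₂ ≠ 0)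
    (hαα : α₁ + α₂ ≠ 0) (hββ : β₁ + β₂ ≠ 0) (hαβ : α₁ + β₁ ≠ 0)
    (D κ : ℂ)
    (hD : D = α₁ * β₂ * (q₂ ⬝ᵥ p₁) * (q₁ ⬝ᵥ p₂) -
        α₂ * β₁ * (q₁ ⬝ᵥ p₁) * (q₂ ⬝ᵥ p₂))
    (hD0 : D ≠ 0)
    (hκ : κ = α₁ + α₂ + β₁ + β₂)
    (P₁ P₂ Q₁ : Fin n → ℂ)
    (hP₁ : P₁ = (α₁ + α₂)⁻¹ •
        (α₁ • ((q₁ ⬝ᵥ p₁)⁻¹ • p₁) + α₂ • ((q₁ ⬝ᵥ p₂)⁻¹ • p₂)))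
    (hP₂ : P₂ = (β₁ + β₂)⁻¹ •
        (β₁ • ((q₂ ⬝ᵥ p₁)⁻¹ • p₁) + β₂ • ((q₂ ⬝ᵥ p₂)⁻¹ • p₂)))
    (hQ₁ : Q₁ = (α₁ + β₁)⁻¹ •
        (α₁ • ((q₁ ⬝ᵥ p₁)⁻¹ • q₁) + β₁ • ((q₂ ⬝ᵥ p₁)⁻¹ • q₂)))
    (α₄ β₄ γ₁ : ℂ)
    (hα₄ : α₄ = -β₂ + κ * (α₁ * β₂ * (q₂ ⬝ᵥ p₁) * (q₁ ⬝ᵥ p₂)) / D)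
    (hβ₄ : β₄ = -α₂ - κ * (α₂ * β₁ * (q₁ ⬝ᵥ p₁) * (q₂ ⬝ᵥ p₂)) / D)
    (hγ₁ : γ₁ = -(α₁ + β₁))
    (hQP₁ : Q₁ ⬝ᵥ P₁ ≠ 0) (hQP₂ : Q₁ ⬝ᵥ P₂ ≠ 0) :
    Q₁ ⬝ᵥ p₁ = 1 ∧
    α₄ • ((Q₁ ⬝ᵥ P₁)⁻¹ • P₁) + β₄ • ((Q₁ ⬝ᵥ P₂)⁻¹ • P₂) + γ₁ • p₁ = 0 ∧
    α₄ + β₄ = α₁ + β₁ :=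
  face_lemma_node_Q₁_general n p₁ p₂ q₁ q₂ h11 h12 h21 h22 α₁ α₂ β₁ β₂ hαβ D κ hD hD0 hκ P₁ P₂ Q₁
    hP₁ hP₂ hQ₁ α₄ β₄ γ₁ hα₄ hβ₄ hγ₁ hQP₁ hQP₂
end

section
/- In the Face Lemma setup (p₁, p₂ ∈ ℂⁿ linearly independent column vectors; q₁†, q₂† linearly independent row vectors; qᵢ†pⱼ ≠ 0 for i,j ∈ {1,2}; nonzero α₁, α₂, β₁, β₂ ∈ ℂ with α₁+α₂ ≠ 0, β₁+β₂ ≠ 0, α₂+β₂ ≠ 0; D := α₁β₂(q₂†p₁)(q₁†p₂) − α₂β₁(q₁†p₁)(q₂†p₂) ≠ 0; κ := α₁+α₂+β₁+β₂), define P₁ = (α₁·p₁/(q₁†p₁) + α₂·p₂/(q₁†p₂))/(α₁+α₂), P₂ = (β₁·p₁/(q₂†p₁) + β₂·p₂/(q₂†p₂))/(β₁+β₂), Q₂† = (α₂·q₁†/(q₁†p₂) + β₂·q₂†/(q₂†p₂))/(α₂+β₂), and set α₅ = −β₁ − κ·α₂β₁(q₁†p₁)(q₂†p₂)/D, β₅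 = −α₁ + κ·α₁β₂(q₂†p₁)(q₁†p₂)/D, γ₂ = −(α₂+β₂). If Q₂†·P₁ ≠ 0 and Q₂†·P₂ ≠ 0, then Q₂†·p₂ = 1 and α₅·P₁/(Q₂†P₁) + β₅·P₂/(Q₂†P₂) + γ₂·p₂ = 0; moreover α₅ + β₅ = α₂ + β₂, and with α₄ = −β₂ + κ·α₁β₂(q₂†p₁)(q₁†p₂)/D and β₄ = −α₂ − κ·α₂β₁(q₁†p₁)(q₂†p₂)/D one has α₄ + α₅ = α₁ + α₂ and β₄ + β₅ = β₁ + β₂. -/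
/-!
Pairing `Q₂†` with the outer vertices gives
`Q₂†P₁ · (α₂+β₂)(α₁+α₂)(q₁†p₁)(q₁†p₂)(q₂†p₂) = κα₂(q₁†p₁)(q₂†p₂) + D` and
`Q₂†P₂ · (α₂+β₂)(β₁+β₂)(q₁†p₂)(q₂†p₁)(q₂†p₂) = κβ₂(q₁†p₂)(q₂†p₁) − D`, while
`α₅ D = −β₁ (κα₂(q₁†p₁)(q₂†p₂) + D)` and `β₅ D = α₁ (κβ₂(q₁†p₂)(q₂†p₁) − D)`.
So the normalizing denominators cancel against the coefficients, and what is left is a combination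
of `p₁, p₂` whose `p₁`-components cancel and whose `p₂`-component is `(α₂+β₂) D / D`.
The sum identities all reduce to `κX/D − κY/D = κ` for `D = X − Y`.
-/

section
variable {K : Type*} [Field K]

theorem mul_div_sub_mul_div_of_eq_sub {κ X Y D : K} (hD : D = X - Y) (hD0 : D ≠ 0) :
    κ * X / D - κ * Y / D = κ := by
  rw [← sub_div, ← mul_sub, ← hD, mul_div_cancel_right₀ _ hD0]

theorem mul_inv_eq_div_of_mul_eq {α c π M N D : K} (hπ : π * M = N) (hπ0 : π ≠ 0)
    (hα : α * D = c * N) (hD0 : D ≠ 0) : α * π⁻¹ = c * M / D := by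
  field_simp
  linear_combination hα - c * hπ

variable {m : Type*} [Fintype m]

theorem dotProduct_mean (z x y : m → K) (α β u v : K) :
    z ⬝ᵥ ((α + β)⁻¹ • (α • (u⁻¹ • x) + β • (v⁻¹ • y))) =
      (α + β)⁻¹ * (α * (z ⬝ᵥ x) / u + β * (z ⬝ᵥ y) / v) := by
  simp only [dotProduct_smul, dotProduct_add, smul_eq_mul]
  ring

theorem mean_dotProduct (z x y : m → K) (α β u v : K) :
    ((α + β)⁻¹ • (α • (u⁻¹ • x) + β • (v⁻¹ • y))) ⬝ᵥ z =
      (α + β)⁻¹ * (α * (x ⬝ᵥ z) / u + β * (y ⬝ᵥ z) / v) := by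
  simp only [smul_dotProduct, add_dotProduct, smul_eq_mul]
  ring

theorem mean_normalized_dotProduct_self {x y z : m → K} (hx : x ⬝ᵥ z ≠ 0) (hy : y ⬝ᵥ z ≠ 0)
    {α β : K} (h : α + β ≠ 0) :
    ((α + β)⁻¹ • (α • ((x ⬝ᵥ z)⁻¹ • x) + β • ((y ⬝ᵥ z)⁻¹ • y))) ⬝ᵥ z = 1 := by
  rw [mean_dotProduct]
  field_simp

end

theorem mean_combination_eq_smul {K V : Type*} [Field K] [AddCommGroup V] [Module K V]
    (p₁ p₂ : V) {a b c d α₁ α₂ β₁ β₂ t D : K}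
    (ha : a ≠ 0) (hb : b ≠ 0) (hc : c ≠ 0) (hd : d ≠ 0)
    (hs : α₁ + α₂ ≠ 0) (hu : β₁ + β₂ ≠ 0)
    (hD : D = α₁ * β₂ * c * b - α₂ * β₁ * a * d) (hD0 : D ≠ 0) :
    (-β₁ * (t * (α₁ + α₂) * a * b * d) / D) •
        ((α₁ + α₂)⁻¹ • (α₁ • (a⁻¹ • p₁) + α₂ • (b⁻¹ • p₂))) +
      (α₁ * (t * (β₁ + β₂) * b * c * d) / D) •
        ((β₁ + β₂)⁻¹ • (β₁ • (c⁻¹ • p₁) + β₂ • (d⁻¹ • p₂))) = t • p₂ := by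
  match_scalars
  · field_simp
    ring
  · field_simp
    rw [hD]
    ring

theorem face_lemma_node_Q₂_general (n : ℕ) (p₁ p₂ q₁ q₂ : Fin n → ℂ)
    (h11 : q₁ ⬝ᵥ p₁ ≠ 0) (h12 : q₁ ⬝ᵥ p₂ ≠ 0)
    (h21 : q₂ ⬝ᵥ p₁ ≠ 0) (h22 : q₂ ⬝ᵥ p₂ ≠ 0)
    (α₁ α₂ β₁ β₂ : ℂ)
    (hαα : α₁ + α₂ ≠ 0) (hββ : β₁ + β₂ ≠ 0) (hαβ : α₂ + β₂ ≠ 0)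
    (D κ : ℂ)
    (hD : D = α₁ * β₂ * (q₂ ⬝ᵥ p₁) * (q₁ ⬝ᵥ p₂) -
        α₂ * β₁ * (q₁ ⬝ᵥ p₁) * (q₂ ⬝ᵥ p₂))
    (hD0 : D ≠ 0)
    (hκ : κ = α₁ + α₂ + β₁ + β₂)
    (P₁ P₂ Q₂ : Fin n → ℂ)
    (hP₁ : P₁ = (α₁ + α₂)⁻¹ •
        (α₁ • ((q₁ ⬝ᵥ p₁)⁻¹ • p₁) + α₂ • ((q₁ ⬝ᵥ p₂)⁻¹ • p₂)))
    (hP₂ : P₂ = (β₁ + β₂)⁻¹ •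
        (β₁ • ((q₂ ⬝ᵥ p₁)⁻¹ • p₁) + β₂ • ((q₂ ⬝ᵥ p₂)⁻¹ • p₂)))
    (hQ₂ : Q₂ = (α₂ + β₂)⁻¹ •
        (α₂ • ((q₁ ⬝ᵥ p₂)⁻¹ • q₁) + β₂ • ((q₂ ⬝ᵥ p₂)⁻¹ • q₂)))
    (α₄ α₅ β₄ β₅ γ₂ : ℂ)
    (hα₄ : α₄ = -β₂ + κ * (α₁ * β₂ * (q₂ ⬝ᵥ p₁) * (q₁ ⬝ᵥ p₂)) / D)
    (hα₅ : α₅ = -β₁ - κ * (α₂ * β₁ * (q₁ ⬝ᵥ p₁) * (q₂ ⬝ᵥ p₂)) / D)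
    (hβ₄ : β₄ = -α₂ - κ * (α₂ * β₁ * (q₁ ⬝ᵥ p₁) * (q₂ ⬝ᵥ p₂)) / D)
    (hβ₅ : β₅ = -α₁ + κ * (α₁ * β₂ * (q₂ ⬝ᵥ p₁) * (q₁ ⬝ᵥ p₂)) / D)
    (hγ₂ : γ₂ = -(α₂ + β₂))
    (hQP₁ : Q₂ ⬝ᵥ P₁ ≠ 0) (hQP₂ : Q₂ ⬝ᵥ P₂ ≠ 0) :
    Q₂ ⬝ᵥ p₂ = 1 ∧
    α₅ • ((Q₂ ⬝ᵥ P₁)⁻¹ • P₁) + β₅ • ((Q₂ ⬝ᵥ P₂)⁻¹ • P₂) + γ₂ • p₂ = 0 ∧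
    α₅ + β₅ = α₂ + β₂ ∧
    α₄ + α₅ = α₁ + α₂ ∧
    β₄ + β₅ = β₁ + β₂ := by
  have hQp₂ : Q₂ ⬝ᵥ p₂ = 1 := hQ₂ ▸ mean_normalized_dotProduct_self h12 h22 hαβ
  have hQp₁ : Q₂ ⬝ᵥ p₁ * ((α₂ + β₂) * (q₁ ⬝ᵥ p₂) * (q₂ ⬝ᵥ p₂)) =
      α₂ * (q₁ ⬝ᵥ p₁) * (q₂ ⬝ᵥ p₂) + β₂ * (q₁ ⬝ᵥ p₂) * (q₂ ⬝ᵥ p₁) := by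
    rw [hQ₂, mean_dotProduct]; field_simp
  have hQP₁_mul : Q₂ ⬝ᵥ P₁ * ((α₂ + β₂) * (α₁ + α₂) * (q₁ ⬝ᵥ p₁) * (q₁ ⬝ᵥ p₂) * (q₂ ⬝ᵥ p₂)) =
      κ * α₂ * (q₁ ⬝ᵥ p₁) * (q₂ ⬝ᵥ p₂) + D := by
    rw [hP₁, dotProduct_mean, hQp₂, hD, hκ]
    field_simp
    linear_combination α₁ * hQp₁
  have hQP₂_mul : Q₂ ⬝ᵥ P₂ * ((α₂ + β₂) * (β₁ + β₂) * (q₁ ⬝ᵥ p₂) * (q₂ ⬝ᵥ p₁) * (q₂ ⬝ᵥ p₂)) =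
      κ * β₂ * (q₁ ⬝ᵥ p₂) * (q₂ ⬝ᵥ p₁) - D := by
    rw [hP₂, dotProduct_mean, hQp₂, hD, hκ]
    field_simp
    linear_combination β₁ * hQp₁
  have hsum := mul_div_sub_mul_div_of_eq_sub (κ := κ) hD hD0
  refine ⟨hQp₂, ?_, by linear_combination hα₅ + hβ₅ + hsum + hκ,
    by linear_combination hα₄ + hα₅ + hsum + hκ, by linear_combination hβ₄ + hβ₅ + hsum + hκ⟩
  have hcoef₁ := mul_inv_eq_div_of_mul_eq hQP₁_mul hQP₁
    (α := α₅) (c := -β₁) (by rw [hα₅]; field_simp; ring) hD0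
  have hcoef₂ := mul_inv_eq_div_of_mul_eq hQP₂_mul hQP₂
    (α := β₅) (c := α₁) (by rw [hβ₅]; field_simp; ring) hD0
  rw [smul_smul, smul_smul, hcoef₁, hcoef₂, hγ₂, neg_smul, ← sub_eq_add_neg, sub_eq_zero, hP₁, hP₂]
  exact mean_combination_eq_smul p₁ p₂ h11 h12 h21 h22 hαα hββ hD hD0

/-- Face Lemma, triple condition at the node `Q₂†`: with `α₅`, `β₅`, `γ₂` as
computed, `(P₁, P₂, p₂)` form a `Q₂†`-based triple with parameters
`(α₅, β₅, γ₂)`; moreover `α₅ + β₅ = α₂ + β₂`, and together with `α₄`, `β₄` one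
has `α₄ + α₅ = α₁ + α₂` and `β₄ + β₅ = β₁ + β₂`. -/
theorem face_lemma_node_Q₂ (n : ℕ) (p₁ p₂ q₁ q₂ : Fin n → ℂ)
    (hp : LinearIndependent ℂ ![p₁, p₂]) (hq : LinearIndependent ℂ ![q₁, q₂])
    (h11 : q₁ ⬝ᵥ p₁ ≠ 0) (h12 : q₁ ⬝ᵥ p₂ ≠ 0)
    (h21 : q₂ ⬝ᵥ p₁ ≠ 0) (h22 : q₂ ⬝ᵥ p₂ ≠ 0)
    (α₁ α₂ β₁ β₂ : ℂ) (ha₁ : α₁ ≠ 0) (ha₂ : α₂ ≠ 0) (hb₁ : β₁ ≠ 0) (hb₂ : β₂ ≠ 0)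
    (hαα : α₁ + α₂ ≠ 0) (hββ : β₁ + β₂ ≠ 0) (hαβ : α₂ + β₂ ≠ 0)
    (D κ : ℂ)
    (hD : D = α₁ * β₂ * (q₂ ⬝ᵥ p₁) * (q₁ ⬝ᵥ p₂) -
        α₂ * β₁ * (q₁ ⬝ᵥ p₁) * (q₂ ⬝ᵥ p₂))
    (hD0 : D ≠ 0)
    (hκ : κ = α₁ + α₂ + β₁ + β₂)
    (P₁ P₂ Q₂ : Fin n → ℂ)
    (hP₁ : P₁ = (α₁ + α₂)⁻¹ •
        (α₁ • ((q₁ ⬝ᵥ p₁)⁻¹ • p₁) + α₂ • ((q₁ ⬝ᵥ p₂)⁻¹ • p₂)))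
    (hP₂ : P₂ = (β₁ + β₂)⁻¹ •
        (β₁ • ((q₂ ⬝ᵥ p₁)⁻¹ • p₁) + β₂ • ((q₂ ⬝ᵥ p₂)⁻¹ • p₂)))
    (hQ₂ : Q₂ = (α₂ + β₂)⁻¹ •
        (α₂ • ((q₁ ⬝ᵥ p₂)⁻¹ • q₁) + β₂ • ((q₂ ⬝ᵥ p₂)⁻¹ • q₂)))
    (α₄ α₅ β₄ β₅ γ₂ : ℂ)
    (hα₄ : α₄ = -β₂ + κ * (α₁ * β₂ * (q₂ ⬝ᵥ p₁) * (q₁ ⬝ᵥ p₂)) / D)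
    (hα₅ : α₅ = -β₁ - κ * (α₂ * β₁ * (q₁ ⬝ᵥ p₁) * (q₂ ⬝ᵥ p₂)) / D)
    (hβ₄ : β₄ = -α₂ - κ * (α₂ * β₁ * (q₁ ⬝ᵥ p₁) * (q₂ ⬝ᵥ p₂)) / D)
    (hβ₅ : β₅ = -α₁ + κ * (α₁ * β₂ * (q₂ ⬝ᵥ p₁) * (q₁ ⬝ᵥ p₂)) / D)
    (hγ₂ : γ₂ = -(α₂ + β₂))
    (hQP₁ : Q₂ ⬝ᵥ P₁ ≠ 0) (hQP₂ : Q₂ ⬝ᵥ P₂ ≠ 0) :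
    Q₂ ⬝ᵥ p₂ = 1 ∧
    α₅ • ((Q₂ ⬝ᵥ P₁)⁻¹ • P₁) + β₅ • ((Q₂ ⬝ᵥ P₂)⁻¹ • P₂) + γ₂ • p₂ = 0 ∧
    α₅ + β₅ = α₂ + β₂ ∧
    α₄ + α₅ = α₁ + α₂ ∧
    β₄ + β₅ = β₁ + β₂ :=
  face_lemma_node_Q₂_general n p₁ p₂ q₁ q₂ h11 h12 h21 h22 α₁ α₂ β₁ β₂ hαα hββ hαβ D κ hD hD0 hκ P₁
    P₂ Q₂ hP₁ hP₂ hQ₂ α₄ α₅ β₄ β₅ γ₂ hα₄ hα₅ hβ₄ hβ₅ hγ₂ hQP₁ hQP₂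
end

section
/- In the Face Lemma setup (p₁, p₂ ∈ ℂⁿ linearly independent column vectors; q₁†, q₂† linearly independent row vectors; qᵢ†pⱼ ≠ 0 for i,j ∈ {1,2}; nonzero α₁, α₂, β₁, β₂ ∈ ℂ with α₁+α₂ ≠ 0, β₁+β₂ ≠ 0, α₁+β₁ ≠ 0, α₂+β₂ ≠ 0; D := α₁β₂(q₂†p₁)(q₁†p₂) − α₂β₁(q₁†p₁)(q₂†p₂) ≠ 0; κ := α₁+α₂+β₁+β₂), define P₁, P₂, Q₁†, Q₂† as the outer cube vertices and set α₄ = −β₂ + κ·α₁β₂(q₂†p₁)(q₁†p₂)/D, α₅ = −β₁ − κ·α₂β₁(q₁†p₁)(q₂†p₂)/D, β₄ = −α₂ − κ·α₂β₁(q₁†p₁)(q₂†p₂)/D, β₅ = −α₁ + κ·α₁β₂(q₂†p₁)(q₁†p₂)/D. If Q₁†·P₁, Q₂†·P₁, Q₁†·P₂, Q₂†·P₂ are all nonzero, then the row-vector triple conditions at the nodes P₁ and P₂ hold: α₄·Q₁†/(Q₁†P₁) + α₅·Q₂†/(Q₂†P₁) − (α₁+α₂)·q₁† = 0 and β₄·Q₁†/(Q₁†P₂)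 + β₅·Q₂†/(Q₂†P₂) − (β₁+β₂)·q₂† = 0 (here q₁†·P₁ = 1 and q₂†·P₂ = 1). -/
/-!
Write `a = q₁†p₁`, `b = q₁†p₂`, `c = q₂†p₁`, `d = q₂†p₂`. Both `α₄ · D` and
`(α₁ + β₁)(α₁ + α₂) a b c · Q₁†P₁` equal `β₂` times the same polynomial, so the weight
`α₄ / Q₁†P₁` is `(α₁ + α₂) β₂ (α₁ + β₁) a b c / D`; likewise `α₅ / Q₂†P₁` is
`-(α₁ + α₂) β₁ (α₂ + β₂) a b d / D`. With these weights the `q₂†`-components of `Q₁†` and `Q₂†`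
cancel and the `q₁†`-component is `(α₁ + α₂) D / D`.

The second weight is the first one for the face with `p₁ ↔ p₂` (and the indices of `α`, `β`
swapped), and the node `P₂` is the node `P₁` of the face with `q₁ ↔ q₂`, `α ↔ β`; both swaps
only change the sign of `D`.
-/

open Matrix

variable {𝕜 ι : Type*} [Field 𝕜]

/-- `(x [u]_s + y [v]_t) / (x + y)` with `[u]_s = s⁻¹ • u`; the outer cube vertices are of this
form, `s` and `t` being the pairings that normalize `u` and `v`. -/
def cubeVertex (x y s t : 𝕜) (u v : ι → 𝕜) : ι → 𝕜 :=
  (x + y)⁻¹ • (x • (s⁻¹ • u) + y • (t⁻¹ • v))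

lemma cubeVertex_comm (x y s t : 𝕜) (u v : ι → 𝕜) :
    cubeVertex x y s t u v = cubeVertex y x t s v u := by
  simp only [cubeVertex, add_comm]

variable [Fintype ι]

lemma dotProduct_cubeVertex (w u v : ι → 𝕜) (x y s t : 𝕜) :
    w ⬝ᵥ cubeVertex x y s t u v =
      (x + y)⁻¹ * (x * s⁻¹ * (w ⬝ᵥ u) + y * t⁻¹ * (w ⬝ᵥ v)) := by
  simp only [cubeVertex, dotProduct_smul, dotProduct_add, smul_eq_mul]
  ring

lemma cubeVertex_dotProduct (w u v : ι → 𝕜) (x y s t : 𝕜) :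
    cubeVertex x y s t u v ⬝ᵥ w =
      (x + y)⁻¹ * (x * s⁻¹ * (u ⬝ᵥ w) + y * t⁻¹ * (v ⬝ᵥ w)) := by
  rw [dotProduct_comm, dotProduct_cubeVertex, dotProduct_comm w u, dotProduct_comm w v]

lemma dotProduct_cubeVertex_self {q u v : ι → 𝕜} {x y : 𝕜} (hu : q ⬝ᵥ u ≠ 0)
    (hv : q ⬝ᵥ v ≠ 0) (hxy : x + y ≠ 0) :
    q ⬝ᵥ cubeVertex x y (q ⬝ᵥ u) (q ⬝ᵥ v) u v = 1 := by
  rw [dotProduct_cubeVertex]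
  field_simp

section Face

variable {p₁ p₂ q₁ q₂ : ι → 𝕜} {α₁ α₂ β₁ β₂ : 𝕜}

lemma mul_cubeVertex_dotProduct_cubeVertex (h11 : q₁ ⬝ᵥ p₁ ≠ 0) (h12 : q₁ ⬝ᵥ p₂ ≠ 0)
    (h21 : q₂ ⬝ᵥ p₁ ≠ 0) (hαα : α₁ + α₂ ≠ 0) (hαβ : α₁ + β₁ ≠ 0) :
    (α₁ + β₁) * (α₁ + α₂) * ((q₁ ⬝ᵥ p₁) * (q₁ ⬝ᵥ p₂) * (q₂ ⬝ᵥ p₁)) *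
        (cubeVertex α₁ β₁ (q₁ ⬝ᵥ p₁) (q₂ ⬝ᵥ p₁) q₁ q₂ ⬝ᵥ
          cubeVertex α₁ α₂ (q₁ ⬝ᵥ p₁) (q₁ ⬝ᵥ p₂) p₁ p₂) =
      α₁ * (α₁ + α₂ + β₁) * (q₂ ⬝ᵥ p₁) * (q₁ ⬝ᵥ p₂) +
        α₂ * β₁ * (q₁ ⬝ᵥ p₁) * (q₂ ⬝ᵥ p₂) := by
  rw [cubeVertex_dotProduct, dotProduct_cubeVertex, dotProduct_cubeVertex]
  field_simp
  ring

lemma smul_cubeVertex_sub_smul_cubeVertex (h11 : q₁ ⬝ᵥ p₁ ≠ 0) (h12 : q₁ ⬝ᵥ p₂ ≠ 0)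
    (h21 : q₂ ⬝ᵥ p₁ ≠ 0) (h22 : q₂ ⬝ᵥ p₂ ≠ 0) (hαβ₁ : α₁ + β₁ ≠ 0) (hαβ₂ : α₂ + β₂ ≠ 0) :
    (β₂ * (α₁ + β₁) * ((q₁ ⬝ᵥ p₁) * (q₁ ⬝ᵥ p₂) * (q₂ ⬝ᵥ p₁))) •
        cubeVertex α₁ β₁ (q₁ ⬝ᵥ p₁) (q₂ ⬝ᵥ p₁) q₁ q₂ -
      (β₁ * (α₂ + β₂) * ((q₁ ⬝ᵥ p₁) * (q₁ ⬝ᵥ p₂) * (q₂ ⬝ᵥ p₂))) •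
        cubeVertex α₂ β₂ (q₁ ⬝ᵥ p₂) (q₂ ⬝ᵥ p₂) q₁ q₂ =
      (α₁ * β₂ * (q₂ ⬝ᵥ p₁) * (q₁ ⬝ᵥ p₂) - α₂ * β₁ * (q₁ ⬝ᵥ p₁) * (q₂ ⬝ᵥ p₂)) • q₁ := by
  simp only [cubeVertex, smul_smul, smul_add]
  match_scalars
  · field_simp
  · field_simp
    ring

lemma mul_inv_cubeVertex_dotProduct_cubeVertex (h11 : q₁ ⬝ᵥ p₁ ≠ 0) (h12 : q₁ ⬝ᵥ p₂ ≠ 0)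
    (h21 : q₂ ⬝ᵥ p₁ ≠ 0) (hαα : α₁ + α₂ ≠ 0) (hαβ : α₁ + β₁ ≠ 0) {D : 𝕜}
    (hD : D = α₁ * β₂ * (q₂ ⬝ᵥ p₁) * (q₁ ⬝ᵥ p₂) - α₂ * β₁ * (q₁ ⬝ᵥ p₁) * (q₂ ⬝ᵥ p₂))
    (hD0 : D ≠ 0)
    (hQP : cubeVertex α₁ β₁ (q₁ ⬝ᵥ p₁) (q₂ ⬝ᵥ p₁) q₁ q₂ ⬝ᵥ
      cubeVertex α₁ α₂ (q₁ ⬝ᵥ p₁) (q₁ ⬝ᵥ p₂) p₁ p₂ ≠ 0) :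
    (-β₂ + (α₁ + α₂ + β₁ + β₂) * (α₁ * β₂ * (q₂ ⬝ᵥ p₁) * (q₁ ⬝ᵥ p₂)) / D) *
        (cubeVertex α₁ β₁ (q₁ ⬝ᵥ p₁) (q₂ ⬝ᵥ p₁) q₁ q₂ ⬝ᵥ
          cubeVertex α₁ α₂ (q₁ ⬝ᵥ p₁) (q₁ ⬝ᵥ p₂) p₁ p₂)⁻¹ =
      β₂ * ((α₁ + β₁) * (α₁ + α₂) * ((q₁ ⬝ᵥ p₁) * (q₁ ⬝ᵥ p₂) * (q₂ ⬝ᵥ p₁))) / D := by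
  have hQP_mul := mul_cubeVertex_dotProduct_cubeVertex (β₁ := β₁) (q₂ := q₂) h11 h12 h21 hαα hαβ
  generalize cubeVertex α₁ β₁ _ _ q₁ q₂ ⬝ᵥ cubeVertex α₁ α₂ _ _ p₁ p₂ = QP at hQP hQP_mul ⊢
  have hweight_mul_D :
      (-β₂ + (α₁ + α₂ + β₁ + β₂) * (α₁ * β₂ * (q₂ ⬝ᵥ p₁) * (q₁ ⬝ᵥ p₂)) / D) * D =
        β₂ * ((α₁ + β₁) * (α₁ + α₂) * ((q₁ ⬝ᵥ p₁) * (q₁ ⬝ᵥ p₂) * (q₂ ⬝ᵥ p₁)) * QP) := by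
    rw [hQP_mul, add_mul, div_mul_cancel₀ _ hD0, hD]
    ring
  rw [eq_div_iff hD0, mul_right_comm, hweight_mul_D]
  field_simp

theorem triple_condition_at_P₁ (h11 : q₁ ⬝ᵥ p₁ ≠ 0) (h12 : q₁ ⬝ᵥ p₂ ≠ 0)
    (h21 : q₂ ⬝ᵥ p₁ ≠ 0) (h22 : q₂ ⬝ᵥ p₂ ≠ 0) (hαα : α₁ + α₂ ≠ 0)
    (hαβ₁ : α₁ + β₁ ≠ 0) (hαβ₂ : α₂ + β₂ ≠ 0) {D : 𝕜}
    (hD : D = α₁ * β₂ * (q₂ ⬝ᵥ p₁) * (q₁ ⬝ᵥ p₂) - α₂ * β₁ * (q₁ ⬝ᵥ p₁) * (q₂ ⬝ᵥ p₂))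
    (hD0 : D ≠ 0) {P₁ Q₁ Q₂ : ι → 𝕜}
    (hP₁ : P₁ = cubeVertex α₁ α₂ (q₁ ⬝ᵥ p₁) (q₁ ⬝ᵥ p₂) p₁ p₂)
    (hQ₁ : Q₁ = cubeVertex α₁ β₁ (q₁ ⬝ᵥ p₁) (q₂ ⬝ᵥ p₁) q₁ q₂)
    (hQ₂ : Q₂ = cubeVertex α₂ β₂ (q₁ ⬝ᵥ p₂) (q₂ ⬝ᵥ p₂) q₁ q₂) {α₄ α₅ : 𝕜}
    (hα₄ : α₄ = -β₂ + (α₁ + α₂ + β₁ + β₂) * (α₁ * β₂ * (q₂ ⬝ᵥ p₁) * (q₁ ⬝ᵥ p₂)) / D)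
    (hα₅ : α₅ = -β₁ - (α₁ + α₂ + β₁ + β₂) * (α₂ * β₁ * (q₁ ⬝ᵥ p₁) * (q₂ ⬝ᵥ p₂)) / D)
    (h₁ : Q₁ ⬝ᵥ P₁ ≠ 0) (h₂ : Q₂ ⬝ᵥ P₁ ≠ 0) :
    α₄ • ((Q₁ ⬝ᵥ P₁)⁻¹ • Q₁) + α₅ • ((Q₂ ⬝ᵥ P₁)⁻¹ • Q₂) = (α₁ + α₂) • q₁ := by
  subst hP₁ hQ₁ hQ₂
  have hweight₁ := hα₄ ▸
    mul_inv_cubeVertex_dotProduct_cubeVertex h11 h12 h21 hαα hαβ₁ hD hD0 h₁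
  have hP₁_comm := cubeVertex_comm α₁ α₂ (q₁ ⬝ᵥ p₁) (q₁ ⬝ᵥ p₂) p₁ p₂
  have hweight₂ : α₅ * (cubeVertex α₂ β₂ (q₁ ⬝ᵥ p₂) (q₂ ⬝ᵥ p₂) q₁ q₂ ⬝ᵥ
      cubeVertex α₁ α₂ (q₁ ⬝ᵥ p₁) (q₁ ⬝ᵥ p₂) p₁ p₂)⁻¹ =
      β₁ * ((α₂ + β₂) * (α₂ + α₁) * ((q₁ ⬝ᵥ p₂) * (q₁ ⬝ᵥ p₁) * (q₂ ⬝ᵥ p₂))) / -D := by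
    rw [hP₁_comm] at h₂ ⊢
    convert mul_inv_cubeVertex_dotProduct_cubeVertex (α₁ := α₂) (α₂ := α₁) (β₁ := β₂) (β₂ := β₁)
      h12 h11 h22 (add_comm α₁ α₂ ▸ hαα) hαβ₂ (D := -D) (by rw [hD]; ring)
      (neg_ne_zero.mpr hD0) h₂ using 2
    rw [hα₅]
    ring
  have hcomb := smul_cubeVertex_sub_smul_cubeVertex h11 h12 h21 h22 hαβ₁ hαβ₂
  rw [← hD] at hcomb
  rw [smul_smul, smul_smul, hweight₁, hweight₂]
  calc _ = ((α₁ + α₂) / D) • ((β₂ * (α₁ + β₁) * ((q₁ ⬝ᵥ p₁) * (q₁ ⬝ᵥ p₂) * (q₂ ⬝ᵥ p₁))) •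
          cubeVertex α₁ β₁ (q₁ ⬝ᵥ p₁) (q₂ ⬝ᵥ p₁) q₁ q₂ -
        (β₁ * (α₂ + β₂) * ((q₁ ⬝ᵥ p₁) * (q₁ ⬝ᵥ p₂) * (q₂ ⬝ᵥ p₂))) •
          cubeVertex α₂ β₂ (q₁ ⬝ᵥ p₂) (q₂ ⬝ᵥ p₂) q₁ q₂) := by
        match_scalars <;> ring
    _ = (α₁ + α₂) • q₁ := by rw [hcomb, smul_smul, div_mul_cancel₀ _ hD0]

end Face

theorem face_lemma_nodes_P₁_P₂_general (n : ℕ) (p₁ p₂ q₁ q₂ : Fin n → ℂ)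
    (h11 : q₁ ⬝ᵥ p₁ ≠ 0) (h12 : q₁ ⬝ᵥ p₂ ≠ 0)
    (h21 : q₂ ⬝ᵥ p₁ ≠ 0) (h22 : q₂ ⬝ᵥ p₂ ≠ 0)
    (α₁ α₂ β₁ β₂ : ℂ)
    (hαα : α₁ + α₂ ≠ 0) (hββ : β₁ + β₂ ≠ 0)
    (hαβ₁ : α₁ + β₁ ≠ 0) (hαβ₂ : α₂ + β₂ ≠ 0)
    (D κ : ℂ)
    (hD : D = α₁ * β₂ * (q₂ ⬝ᵥ p₁) * (q₁ ⬝ᵥ p₂) -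
        α₂ * β₁ * (q₁ ⬝ᵥ p₁) * (q₂ ⬝ᵥ p₂))
    (hD0 : D ≠ 0)
    (hκ : κ = α₁ + α₂ + β₁ + β₂)
    (P₁ P₂ Q₁ Q₂ : Fin n → ℂ)
    (hP₁ : P₁ = (α₁ + α₂)⁻¹ •
        (α₁ • ((q₁ ⬝ᵥ p₁)⁻¹ • p₁) + α₂ • ((q₁ ⬝ᵥ p₂)⁻¹ • p₂)))
    (hP₂ : P₂ = (β₁ + β₂)⁻¹ •
        (β₁ • ((q₂ ⬝ᵥ p₁)⁻¹ • p₁) + β₂ • ((q₂ ⬝ᵥ p₂)⁻¹ • p₂)))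
    (hQ₁ : Q₁ = (α₁ + β₁)⁻¹ •
        (α₁ • ((q₁ ⬝ᵥ p₁)⁻¹ • q₁) + β₁ • ((q₂ ⬝ᵥ p₁)⁻¹ • q₂)))
    (hQ₂ : Q₂ = (α₂ + β₂)⁻¹ •
        (α₂ • ((q₁ ⬝ᵥ p₂)⁻¹ • q₁) + β₂ • ((q₂ ⬝ᵥ p₂)⁻¹ • q₂)))
    (α₄ α₅ β₄ β₅ : ℂ)
    (hα₄ : α₄ = -β₂ + κ * (α₁ * β₂ * (q₂ ⬝ᵥ p₁) * (q₁ ⬝ᵥ p₂)) / D)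
    (hα₅ : α₅ = -β₁ - κ * (α₂ * β₁ * (q₁ ⬝ᵥ p₁) * (q₂ ⬝ᵥ p₂)) / D)
    (hβ₄ : β₄ = -α₂ - κ * (α₂ * β₁ * (q₁ ⬝ᵥ p₁) * (q₂ ⬝ᵥ p₂)) / D)
    (hβ₅ : β₅ = -α₁ + κ * (α₁ * β₂ * (q₂ ⬝ᵥ p₁) * (q₁ ⬝ᵥ p₂)) / D)
    (h1 : Q₁ ⬝ᵥ P₁ ≠ 0) (h2 : Q₂ ⬝ᵥ P₁ ≠ 0)
    (h3 : Q₁ ⬝ᵥ P₂ ≠ 0) (h4 : Q₂ ⬝ᵥ P₂ ≠ 0) :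
    q₁ ⬝ᵥ P₁ = 1 ∧ q₂ ⬝ᵥ P₂ = 1 ∧
    α₄ • ((Q₁ ⬝ᵥ P₁)⁻¹ • Q₁) + α₅ • ((Q₂ ⬝ᵥ P₁)⁻¹ • Q₂) - (α₁ + α₂) • q₁ = 0 ∧
    β₄ • ((Q₁ ⬝ᵥ P₂)⁻¹ • Q₁) + β₅ • ((Q₂ ⬝ᵥ P₂)⁻¹ • Q₂) - (β₁ + β₂) • q₂ = 0 := by
  subst hκ
  refine ⟨hP₁ ▸ dotProduct_cubeVertex_self h11 h12 hαα,
    hP₂ ▸ dotProduct_cubeVertex_self h21 h22 hββ,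
    sub_eq_zero.mpr <| triple_condition_at_P₁ h11 h12 h21 h22 hαα hαβ₁ hαβ₂ hD hD0
      hP₁ hQ₁ hQ₂ hα₄ hα₅ h1 h2,
    sub_eq_zero.mpr ?_⟩
  exact triple_condition_at_P₁ (α₁ := β₁) (α₂ := β₂) (β₁ := α₁) (β₂ := α₂) h21 h22 h11 h12 hββ
    (add_comm α₁ β₁ ▸ hαβ₁) (add_comm α₂ β₂ ▸ hαβ₂) (D := -D) (by rw [hD]; ring)
    (neg_ne_zero.mpr hD0) hP₂ (hQ₁.trans (cubeVertex_comm _ _ _ _ _ _))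
    (hQ₂.trans (cubeVertex_comm _ _ _ _ _ _)) (by rw [hβ₄]; ring) (by rw [hβ₅]; ring) h3 h4

/-- Face Lemma, row-vector triple conditions at the nodes `P₁` and `P₂`:
`(Q₁†, Q₂†, q₁†)` form a `P₁`-based triple with parameters
`(α₄, α₅, −(α₁+α₂))`, and `(Q₁†, Q₂†, q₂†)` form a `P₂`-based triple with
parameters `(β₄, β₅, −(β₁+β₂))`. -/
theorem face_lemma_nodes_P₁_P₂ (n : ℕ) (p₁ p₂ q₁ q₂ : Fin n → ℂ)
    (hp : LinearIndependent ℂ ![p₁, p₂]) (hq : LinearIndependent ℂ ![q₁, q₂])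
    (h11 : q₁ ⬝ᵥ p₁ ≠ 0) (h12 : q₁ ⬝ᵥ p₂ ≠ 0)
    (h21 : q₂ ⬝ᵥ p₁ ≠ 0) (h22 : q₂ ⬝ᵥ p₂ ≠ 0)
    (α₁ α₂ β₁ β₂ : ℂ) (ha₁ : α₁ ≠ 0) (ha₂ : α₂ ≠ 0) (hb₁ : β₁ ≠ 0) (hb₂ : β₂ ≠ 0)
    (hαα : α₁ + α₂ ≠ 0) (hββ : β₁ + β₂ ≠ 0)
    (hαβ₁ : α₁ + β₁ ≠ 0) (hαβ₂ : α₂ + β₂ ≠ 0)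
    (D κ : ℂ)
    (hD : D = α₁ * β₂ * (q₂ ⬝ᵥ p₁) * (q₁ ⬝ᵥ p₂) -
        α₂ * β₁ * (q₁ ⬝ᵥ p₁) * (q₂ ⬝ᵥ p₂))
    (hD0 : D ≠ 0)
    (hκ : κ = α₁ + α₂ + β₁ + β₂)
    (P₁ P₂ Q₁ Q₂ : Fin n → ℂ)
    (hP₁ : P₁ = (α₁ + α₂)⁻¹ •
        (α₁ • ((q₁ ⬝ᵥ p₁)⁻¹ • p₁) + α₂ • ((q₁ ⬝ᵥ p₂)⁻¹ • p₂)))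
    (hP₂ : P₂ = (β₁ + β₂)⁻¹ •
        (β₁ • ((q₂ ⬝ᵥ p₁)⁻¹ • p₁) + β₂ • ((q₂ ⬝ᵥ p₂)⁻¹ • p₂)))
    (hQ₁ : Q₁ = (α₁ + β₁)⁻¹ •
        (α₁ • ((q₁ ⬝ᵥ p₁)⁻¹ • q₁) + β₁ • ((q₂ ⬝ᵥ p₁)⁻¹ • q₂)))
    (hQ₂ : Q₂ = (α₂ + β₂)⁻¹ •
        (α₂ • ((q₁ ⬝ᵥ p₂)⁻¹ • q₁) + β₂ • ((q₂ ⬝ᵥ p₂)⁻¹ • q₂)))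
    (α₄ α₅ β₄ β₅ : ℂ)
    (hα₄ : α₄ = -β₂ + κ * (α₁ * β₂ * (q₂ ⬝ᵥ p₁) * (q₁ ⬝ᵥ p₂)) / D)
    (hα₅ : α₅ = -β₁ - κ * (α₂ * β₁ * (q₁ ⬝ᵥ p₁) * (q₂ ⬝ᵥ p₂)) / D)
    (hβ₄ : β₄ = -α₂ - κ * (α₂ * β₁ * (q₁ ⬝ᵥ p₁) * (q₂ ⬝ᵥ p₂)) / D)
    (hβ₅ : β₅ = -α₁ + κ * (α₁ * β₂ * (q₂ ⬝ᵥ p₁) * (q₁ ⬝ᵥ p₂)) / D)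
    (h1 : Q₁ ⬝ᵥ P₁ ≠ 0) (h2 : Q₂ ⬝ᵥ P₁ ≠ 0)
    (h3 : Q₁ ⬝ᵥ P₂ ≠ 0) (h4 : Q₂ ⬝ᵥ P₂ ≠ 0) :
    q₁ ⬝ᵥ P₁ = 1 ∧ q₂ ⬝ᵥ P₂ = 1 ∧
    α₄ • ((Q₁ ⬝ᵥ P₁)⁻¹ • Q₁) + α₅ • ((Q₂ ⬝ᵥ P₁)⁻¹ • Q₂) - (α₁ + α₂) • q₁ = 0 ∧
    β₄ • ((Q₁ ⬝ᵥ P₂)⁻¹ • Q₁) + β₅ • ((Q₂ ⬝ᵥ P₂)⁻¹ • Q₂) - (β₁ + β₂) • q₂ = 0 :=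
  face_lemma_nodes_P₁_P₂_general n p₁ p₂ q₁ q₂ h11 h12 h21 h22 α₁ α₂ β₁ β₂ hαα hββ hαβ₁ hαβ₂ D κ hD
    hD0 hκ P₁ P₂ Q₁ Q₂ hP₁ hP₂ hQ₁ hQ₂ α₄ α₅ β₄ β₅ hα₄ hα₅ hβ₄ hβ₅ h1 h2 h3 h4
end

section
/- In the Face Lemma setup (p₁, p₂ ∈ ℂⁿ column vectors; q₁†, q₂† row vectors; qᵢ†pⱼ ≠ 0 for i,j ∈ {1,2}; α₁, α₂, β₁, β₂ ∈ ℂ with α₁+α₂ ≠ 0, β₁+β₂ ≠ 0, α₁+β₁ ≠ 0; κ := α₁+α₂+β₁+β₂), define P₁ = (α₁·p₁/(q₁†p₁) + α₂·p₂/(q₁†p₂))/(α₁+α₂), P₂ = (β₁·p₁/(q₂†p₁) + β₂·p₂/(q₂†p₂))/(β₁+β₂), Q₁† = (α₁·q₁†/(q₁†p₁) + β₁·q₂†/(q₂†p₁))/(α₁+β₁). Then the pairings are given explicitly by: Q₁†·P₁ = (−1/((α₁+α₂)(α₁+β₁)))·(α₁(β₂−κ)(q₂†p₁)(q₁†p₂)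 − α₂β₁(q₁†p₁)(q₂†p₂))/((q₁†p₁)(q₂†p₁)(q₁†p₂)), and Q₁†·P₂ = (1/((β₁+β₂)(α₁+β₁)))·(α₁β₂(q₂†p₁)(q₁†p₂) − (α₂−κ)β₁(q₁†p₁)(q₂†p₂))/((q₁†p₁)(q₂†p₁)(q₂†p₂)). -/
/-!
Expanding `Q₁† ⬝ P` bilinearly gives four pairings of normalized vectors. Whenever the row and
the column vector are normalized against a common partner, e.g. `[q₁†]_{p₁} ⬝ [p₂]_{q₁†}`, the
pairing collapses to `1 / (q₁† p₁)`; so three of the four terms of each pairing collapse, and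
only one cross term involving `q₂† p₂` (resp. `q₁† p₂`) survives.
-/

open Matrix

theorem add_smul_dotProduct_add_smul {R ι : Type*} [CommSemiring R] [Fintype ι]
    (x₁ x₂ y₁ y₂ : R) (u₁ u₂ v₁ v₂ : ι → R) :
    (x₁ • u₁ + x₂ • u₂) ⬝ᵥ (y₁ • v₁ + y₂ • v₂) =
      x₁ * y₁ * (u₁ ⬝ᵥ v₁) + x₁ * y₂ * (u₁ ⬝ᵥ v₂) +
        x₂ * y₁ * (u₂ ⬝ᵥ v₁) + x₂ * y₂ * (u₂ ⬝ᵥ v₂) := by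
  simp only [add_dotProduct, dotProduct_add, smul_dotProduct, dotProduct_smul, smul_eq_mul]
  ring

section Pairing

variable {K ι : Type*} [Field K] [Fintype ι]

theorem inv_smul_dotProduct_inv_smul (x y : K) (q p : ι → K) :
    (x⁻¹ • q) ⬝ᵥ (y⁻¹ • p) = (q ⬝ᵥ p) / (x * y) := by
  simp only [smul_dotProduct, dotProduct_smul, smul_eq_mul]
  field_simp

theorem normalized_dotProduct_normalized_of_left {q p p' : ι → K} (h : q ⬝ᵥ p' ≠ 0) :
    ((q ⬝ᵥ p)⁻¹ • q) ⬝ᵥ ((q ⬝ᵥ p')⁻¹ • p') = (q ⬝ᵥ p)⁻¹ := by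
  rw [inv_smul_dotProduct_inv_smul, mul_comm, div_mul_cancel_left₀ h]

theorem normalized_dotProduct_normalized_of_right {q q' p : ι → K} (h : q' ⬝ᵥ p ≠ 0) :
    ((q' ⬝ᵥ p)⁻¹ • q') ⬝ᵥ ((q ⬝ᵥ p)⁻¹ • p) = (q ⬝ᵥ p)⁻¹ := by
  rw [inv_smul_dotProduct_inv_smul, div_mul_cancel_left₀ h]

variable {p₁ p₂ q₁ q₂ : ι → K} (α₁ α₂ β₁ β₂ : K)

theorem face_pairing₁ (h11 : q₁ ⬝ᵥ p₁ ≠ 0) (h12 : q₁ ⬝ᵥ p₂ ≠ 0) (h21 : q₂ ⬝ᵥ p₁ ≠ 0) :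
    (α₁ • ((q₁ ⬝ᵥ p₁)⁻¹ • q₁) + β₁ • ((q₂ ⬝ᵥ p₁)⁻¹ • q₂)) ⬝ᵥ
        (α₁ • ((q₁ ⬝ᵥ p₁)⁻¹ • p₁) + α₂ • ((q₁ ⬝ᵥ p₂)⁻¹ • p₂)) =
      α₁ * (α₁ + α₂ + β₁) / (q₁ ⬝ᵥ p₁) +
        α₂ * β₁ * (q₂ ⬝ᵥ p₂) / ((q₂ ⬝ᵥ p₁) * (q₁ ⬝ᵥ p₂)) := by
  rw [add_smul_dotProduct_add_smul, normalized_dotProduct_normalized_of_left h11,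
    normalized_dotProduct_normalized_of_left h12, normalized_dotProduct_normalized_of_right h21,
    inv_smul_dotProduct_inv_smul]
  ring

theorem face_pairing₂ (h11 : q₁ ⬝ᵥ p₁ ≠ 0) (h21 : q₂ ⬝ᵥ p₁ ≠ 0) (h22 : q₂ ⬝ᵥ p₂ ≠ 0) :
    (α₁ • ((q₁ ⬝ᵥ p₁)⁻¹ • q₁) + β₁ • ((q₂ ⬝ᵥ p₁)⁻¹ • q₂)) ⬝ᵥ
        (β₁ • ((q₂ ⬝ᵥ p₁)⁻¹ • p₁) + β₂ • ((q₂ ⬝ᵥ p₂)⁻¹ • p₂)) =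
      β₁ * (α₁ + β₁ + β₂) / (q₂ ⬝ᵥ p₁) +
        α₁ * β₂ * (q₁ ⬝ᵥ p₂) / ((q₁ ⬝ᵥ p₁) * (q₂ ⬝ᵥ p₂)) := by
  rw [add_smul_dotProduct_add_smul, normalized_dotProduct_normalized_of_right h11,
    normalized_dotProduct_normalized_of_left h21, normalized_dotProduct_normalized_of_left h22,
    inv_smul_dotProduct_inv_smul]
  ring

end Pairing

theorem face_lemma_pairings_general (n : ℕ) (p₁ p₂ q₁ q₂ : Fin n → ℂ)
    (h11 : q₁ ⬝ᵥ p₁ ≠ 0) (h12 : q₁ ⬝ᵥ p₂ ≠ 0)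
    (h21 : q₂ ⬝ᵥ p₁ ≠ 0) (h22 : q₂ ⬝ᵥ p₂ ≠ 0)
    (α₁ α₂ β₁ β₂ : ℂ)
    (κ : ℂ) (hκ : κ = α₁ + α₂ + β₁ + β₂)
    (P₁ P₂ Q₁ : Fin n → ℂ)
    (hP₁ : P₁ = (α₁ + α₂)⁻¹ •
        (α₁ • ((q₁ ⬝ᵥ p₁)⁻¹ • p₁) + α₂ • ((q₁ ⬝ᵥ p₂)⁻¹ • p₂)))
    (hP₂ : P₂ = (β₁ + β₂)⁻¹ •
        (β₁ • ((q₂ ⬝ᵥ p₁)⁻¹ • p₁) + β₂ • ((q₂ ⬝ᵥ p₂)⁻¹ • p₂)))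
    (hQ₁ : Q₁ = (α₁ + β₁)⁻¹ •
        (α₁ • ((q₁ ⬝ᵥ p₁)⁻¹ • q₁) + β₁ • ((q₂ ⬝ᵥ p₁)⁻¹ • q₂))) :
    Q₁ ⬝ᵥ P₁ =
      (-1 / ((α₁ + α₂) * (α₁ + β₁))) *
        ((α₁ * (β₂ - κ) * (q₂ ⬝ᵥ p₁) * (q₁ ⬝ᵥ p₂) -
            α₂ * β₁ * (q₁ ⬝ᵥ p₁) * (q₂ ⬝ᵥ p₂)) /
          ((q₁ ⬝ᵥ p₁) * (q₂ ⬝ᵥ p₁) * (q₁ ⬝ᵥ p₂))) ∧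
    Q₁ ⬝ᵥ P₂ =
      (1 / ((β₁ + β₂) * (α₁ + β₁))) *
        ((α₁ * β₂ * (q₂ ⬝ᵥ p₁) * (q₁ ⬝ᵥ p₂) -
            (α₂ - κ) * β₁ * (q₁ ⬝ᵥ p₁) * (q₂ ⬝ᵥ p₂)) /
          ((q₁ ⬝ᵥ p₁) * (q₂ ⬝ᵥ p₁) * (q₂ ⬝ᵥ p₂))) := by
  subst hκ hP₁ hP₂ hQ₁
  simp only [smul_dotProduct, dotProduct_smul, smul_eq_mul]
  rw [face_pairing₁ α₁ α₂ β₁ h11 h12 h21, face_pairing₂ α₁ β₁ β₂ h11 h21 h22]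
  constructor
  · field_simp
    ring
  · field_simp
    ring

/-- Face Lemma pairing computations: explicit formulas for `Q₁†·P₁` and
`Q₁†·P₂` in terms of the inner face data. -/
theorem face_lemma_pairings (n : ℕ) (p₁ p₂ q₁ q₂ : Fin n → ℂ)
    (h11 : q₁ ⬝ᵥ p₁ ≠ 0) (h12 : q₁ ⬝ᵥ p₂ ≠ 0)
    (h21 : q₂ ⬝ᵥ p₁ ≠ 0) (h22 : q₂ ⬝ᵥ p₂ ≠ 0)
    (α₁ α₂ β₁ β₂ : ℂ)
    (hαα : α₁ + α₂ ≠ 0) (hββ : β₁ + β₂ ≠ 0) (hαβ : α₁ + β₁ ≠ 0)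
    (κ : ℂ) (hκ : κ = α₁ + α₂ + β₁ + β₂)
    (P₁ P₂ Q₁ : Fin n → ℂ)
    (hP₁ : P₁ = (α₁ + α₂)⁻¹ •
        (α₁ • ((q₁ ⬝ᵥ p₁)⁻¹ • p₁) + α₂ • ((q₁ ⬝ᵥ p₂)⁻¹ • p₂)))
    (hP₂ : P₂ = (β₁ + β₂)⁻¹ •
        (β₁ • ((q₂ ⬝ᵥ p₁)⁻¹ • p₁) + β₂ • ((q₂ ⬝ᵥ p₂)⁻¹ • p₂)))
    (hQ₁ : Q₁ = (α₁ + β₁)⁻¹ •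
        (α₁ • ((q₁ ⬝ᵥ p₁)⁻¹ • q₁) + β₁ • ((q₂ ⬝ᵥ p₁)⁻¹ • q₂))) :
    Q₁ ⬝ᵥ P₁ =
      (-1 / ((α₁ + α₂) * (α₁ + β₁))) *
        ((α₁ * (β₂ - κ) * (q₂ ⬝ᵥ p₁) * (q₁ ⬝ᵥ p₂) -
            α₂ * β₁ * (q₁ ⬝ᵥ p₁) * (q₂ ⬝ᵥ p₂)) /
          ((q₁ ⬝ᵥ p₁) * (q₂ ⬝ᵥ p₁) * (q₁ ⬝ᵥ p₂))) ∧
    Q₁ ⬝ᵥ P₂ =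
      (1 / ((β₁ + β₂) * (α₁ + β₁))) *
        ((α₁ * β₂ * (q₂ ⬝ᵥ p₁) * (q₁ ⬝ᵥ p₂) -
            (α₂ - κ) * β₁ * (q₁ ⬝ᵥ p₁) * (q₂ ⬝ᵥ p₂)) /
          ((q₁ ⬝ᵥ p₁) * (q₂ ⬝ᵥ p₁) * (q₂ ⬝ᵥ p₂))) :=
  face_lemma_pairings_general n p₁ p₂ q₁ q₂ h11 h12 h21 h22 α₁ α₂ β₁ β₂ κ hκ P₁ P₂ Q₁ hP₁ hP₂ hQ₁
end

section
/- In the Face Lemma setup with the cyclic condition κ = α₁+α₂+β₁+β₂ = 0 (p₁, p₂ ∈ ℂⁿ linearly independent; q₁†, q₂† linearly independent row vectors; qᵢ†pⱼ ≠ 0 for i,j ∈ {1,2}; α₁, α₂, β₁, β₂ nonzero; α₁+α₂ ≠ 0, β₁+β₂ ≠ 0, α₁+β₁ ≠ 0, α₂+β₂ ≠ 0; and Q₁†·P₁, Q₁†·P₂, Q₂†·P₁, Q₂†·P₂ all nonzero), the cube closes with α₄ = −β₂, α₅ = −β₁, β₄ = −α₂, β₅ = −α₁; that is, all four outer node relations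 hold: (1) −β₂·P₁/(Q₁†P₁) − α₂·P₂/(Q₁†P₂) − (α₁+β₁)·p₁ = 0; (2) −β₁·P₁/(Q₂†P₁) − α₁·P₂/(Q₂†P₂) − (α₂+β₂)·p₂ = 0; (3) −β₂·Q₁†/(Q₁†P₁) − β₁·Q₂†/(Q₂†P₁) − (α₁+α₂)·q₁† = 0; (4) −α₂·Q₁†/(Q₁†P₂) − α₁·Q₂†/(Q₂†P₂) − (β₁+β₂)·q₂† = 0 (here Q₁†·p₁ = Q₂†·p₂ = q₁†·P₁ = q₂†·P₂ = 1). -/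
open Matrix

/-!
The outer vertices are weighted means of normalized vectors, so all pairings between them are
explicit: `Q₁ ⬝ᵥ P₁` and `Q₁ ⬝ᵥ P₂` are the same quantity `E = α₂β₁(q₁p₁)(q₂p₂) - α₁β₂(q₁p₂)(q₂p₁)`
divided by different products of pairings, and `E ≠ 0` because `Q₁ ⬝ᵥ P₁ ≠ 0`. Expanding the first
outer node relation in the basis `p₁, p₂` then reduces it to two rational identities that hold
exactly when `κ = 0`. The other three relations are instances of the first: exchanging the indices
of `p₁, p₂` (with `α₁ ↔ α₂`, `β₁ ↔ β₂`) fixes `P₁, P₂` and swaps `Q₁, Q₂`, and exchanging the roles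
of the `p`'s and the `q`'s (with `α₂ ↔ β₁`) swaps the `P`'s with the `Q`'s.
-/

variable {ι K : Type*} [Fintype ι] [Field K]

/-- The paper's `[u]_{r†}`. -/
def normalized (r u : ι → K) : ι → K := (r ⬝ᵥ u)⁻¹ • u

def normalizedMean (r : ι → K) (x y : K) (u v : ι → K) : ι → K :=
  (x + y)⁻¹ • (x • normalized r u + y • normalized r v)

theorem dotProduct_normalized {r u : ι → K} (h : r ⬝ᵥ u ≠ 0) : r ⬝ᵥ normalized r u = 1 := by
  rw [normalized, dotProduct_smul, smul_eq_mul, inv_mul_cancel₀ h]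

theorem dotProduct_normalizedMean {r u v : ι → K} {x y : K} (hxy : x + y ≠ 0)
    (hu : r ⬝ᵥ u ≠ 0) (hv : r ⬝ᵥ v ≠ 0) : r ⬝ᵥ normalizedMean r x y u v = 1 := by
  simp only [normalizedMean, dotProduct_smul, dotProduct_add, dotProduct_normalized hu,
    dotProduct_normalized hv, smul_eq_mul, mul_one, inv_mul_cancel₀ hxy]

theorem normalizedMean_comm (r : ι → K) (x y : K) (u v : ι → K) :
    normalizedMean r x y u v = normalizedMean r y x v u := by
  rw [normalizedMean, normalizedMean, add_comm x, add_comm (x • _)]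

theorem normalizedMean_dotProduct_normalizedMean {p p' q q' : ι → K} {x y z w : K}
    (hA : q ⬝ᵥ p ≠ 0) (hB : q ⬝ᵥ p' ≠ 0) (hC : q' ⬝ᵥ p ≠ 0) :
    normalizedMean p x y q q' ⬝ᵥ normalizedMean q z w p p' =
      (x + y)⁻¹ * (z + w)⁻¹ *
        ((x * z + x * w + y * z) / (q ⬝ᵥ p) + y * w * (q' ⬝ᵥ p') / ((q ⬝ᵥ p') * (q' ⬝ᵥ p))) := by
  simp only [normalizedMean, normalized, smul_dotProduct, dotProduct_smul, add_dotProduct,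
    dotProduct_add, smul_eq_mul, dotProduct_comm p q, dotProduct_comm p q']
  field_simp
  ring

theorem outer_node_relation {p₁ p₂ q₁ q₂ P₁ P₂ Q : ι → K} {α₁ α₂ β₁ β₂ : K}
    (h11 : q₁ ⬝ᵥ p₁ ≠ 0) (h12 : q₁ ⬝ᵥ p₂ ≠ 0) (h21 : q₂ ⬝ᵥ p₁ ≠ 0) (h22 : q₂ ⬝ᵥ p₂ ≠ 0)
    (hαα : α₁ + α₂ ≠ 0) (hαβ : α₁ + β₁ ≠ 0) (hκ : α₁ + α₂ + β₁ + β₂ = 0)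
    (hP₁ : P₁ = normalizedMean q₁ α₁ α₂ p₁ p₂) (hP₂ : P₂ = normalizedMean q₂ β₁ β₂ p₁ p₂)
    (hQ : Q = normalizedMean p₁ α₁ β₁ q₁ q₂) (hQP : Q ⬝ᵥ P₁ ≠ 0) :
    (-β₂) • ((Q ⬝ᵥ P₁)⁻¹ • P₁) + (-α₂) • ((Q ⬝ᵥ P₂)⁻¹ • P₂) - (α₁ + β₁) • p₁ = 0 := by
  obtain rfl : β₂ = -(α₁ + α₂ + β₁) := by linear_combination hκ
  have hβsum : β₁ + -(α₁ + α₂ + β₁) = -(α₁ + α₂) := by ring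
  set E := α₂ * β₁ * ((q₁ ⬝ᵥ p₁) * (q₂ ⬝ᵥ p₂)) + α₁ * (α₁ + α₂ + β₁) * ((q₁ ⬝ᵥ p₂) * (q₂ ⬝ᵥ p₁))
  have hD₁ : Q ⬝ᵥ P₁ = E / ((q₁ ⬝ᵥ p₁) * (q₁ ⬝ᵥ p₂) * (q₂ ⬝ᵥ p₁) * ((α₁ + α₂) * (α₁ + β₁))) := by
    rw [hQ, hP₁, normalizedMean_dotProduct_normalizedMean h11 h12 h21]
    field_simp
    ring
  have hD₂ : Q ⬝ᵥ P₂ = E / ((q₁ ⬝ᵥ p₁) * (q₂ ⬝ᵥ p₁) * (q₂ ⬝ᵥ p₂) * ((α₁ + α₂) * (α₁ + β₁))) := by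
    rw [hQ, normalizedMean_comm, hP₂, normalizedMean_dotProduct_normalizedMean h21 h22 h11, hβsum,
      add_comm β₁]
    field_simp
    ring
  have hE : E ≠ 0 := fun h ↦ hQP (by rw [hD₁, h, zero_div])
  rw [hD₁, hD₂, hP₁, hP₂]
  simp only [normalizedMean, normalized, hβsum]
  match_scalars <;> field_simp <;> ring

theorem face_lemma_cyclic_cube_general (n : ℕ) (p₁ p₂ q₁ q₂ : Fin n → ℂ)
    (h11 : q₁ ⬝ᵥ p₁ ≠ 0) (h12 : q₁ ⬝ᵥ p₂ ≠ 0)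
    (h21 : q₂ ⬝ᵥ p₁ ≠ 0) (h22 : q₂ ⬝ᵥ p₂ ≠ 0)
    (α₁ α₂ β₁ β₂ : ℂ)
    (hαα : α₁ + α₂ ≠ 0) (hββ : β₁ + β₂ ≠ 0)
    (hαβ₁ : α₁ + β₁ ≠ 0) (hαβ₂ : α₂ + β₂ ≠ 0)
    (hκ : α₁ + α₂ + β₁ + β₂ = 0)
    (P₁ P₂ Q₁ Q₂ : Fin n → ℂ)
    (hP₁ : P₁ = (α₁ + α₂)⁻¹ •
        (α₁ • ((q₁ ⬝ᵥ p₁)⁻¹ • p₁) + α₂ • ((q₁ ⬝ᵥ p₂)⁻¹ • p₂)))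
    (hP₂ : P₂ = (β₁ + β₂)⁻¹ •
        (β₁ • ((q₂ ⬝ᵥ p₁)⁻¹ • p₁) + β₂ • ((q₂ ⬝ᵥ p₂)⁻¹ • p₂)))
    (hQ₁ : Q₁ = (α₁ + β₁)⁻¹ •
        (α₁ • ((q₁ ⬝ᵥ p₁)⁻¹ • q₁) + β₁ • ((q₂ ⬝ᵥ p₁)⁻¹ • q₂)))
    (hQ₂ : Q₂ = (α₂ + β₂)⁻¹ •
        (α₂ • ((q₁ ⬝ᵥ p₂)⁻¹ • q₁) + β₂ • ((q₂ ⬝ᵥ p₂)⁻¹ • q₂)))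
    (h1 : Q₁ ⬝ᵥ P₁ ≠ 0) (h2 : Q₁ ⬝ᵥ P₂ ≠ 0)
    (h3 : Q₂ ⬝ᵥ P₁ ≠ 0) :
    Q₁ ⬝ᵥ p₁ = 1 ∧ Q₂ ⬝ᵥ p₂ = 1 ∧ q₁ ⬝ᵥ P₁ = 1 ∧ q₂ ⬝ᵥ P₂ = 1 ∧
    (-β₂) • ((Q₁ ⬝ᵥ P₁)⁻¹ • P₁) + (-α₂) • ((Q₁ ⬝ᵥ P₂)⁻¹ • P₂) -
      (α₁ + β₁) • p₁ = 0 ∧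
    (-β₁) • ((Q₂ ⬝ᵥ P₁)⁻¹ • P₁) + (-α₁) • ((Q₂ ⬝ᵥ P₂)⁻¹ • P₂) -
      (α₂ + β₂) • p₂ = 0 ∧
    (-β₂) • ((Q₁ ⬝ᵥ P₁)⁻¹ • Q₁) + (-β₁) • ((Q₂ ⬝ᵥ P₁)⁻¹ • Q₂) -
      (α₁ + α₂) • q₁ = 0 ∧
    (-α₂) • ((Q₁ ⬝ᵥ P₂)⁻¹ • Q₁) + (-α₁) • ((Q₂ ⬝ᵥ P₂)⁻¹ • Q₂) -
      (β₁ + β₂) • q₂ = 0 := by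
  replace hP₁ : P₁ = normalizedMean q₁ α₁ α₂ p₁ p₂ := hP₁
  replace hP₂ : P₂ = normalizedMean q₂ β₁ β₂ p₁ p₂ := hP₂
  replace hQ₁ : Q₁ = normalizedMean p₁ α₁ β₁ q₁ q₂ := by
    simp only [hQ₁, normalizedMean, normalized, dotProduct_comm p₁]
  replace hQ₂ : Q₂ = normalizedMean p₂ α₂ β₂ q₁ q₂ := by
    simp only [hQ₂, normalizedMean, normalized, dotProduct_comm p₂]
  have h11' : p₁ ⬝ᵥ q₁ ≠ 0 := by rwa [dotProduct_comm]
  have h12' : p₂ ⬝ᵥ q₁ ≠ 0 := by rwa [dotProduct_comm]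
  have h21' : p₁ ⬝ᵥ q₂ ≠ 0 := by rwa [dotProduct_comm]
  have h22' : p₂ ⬝ᵥ q₂ ≠ 0 := by rwa [dotProduct_comm]
  refine ⟨?_, ?_, hP₁ ▸ dotProduct_normalizedMean hαα h11 h12,
    hP₂ ▸ dotProduct_normalizedMean hββ h21 h22,
    outer_node_relation h11 h12 h21 h22 hαα hαβ₁ hκ hP₁ hP₂ hQ₁ h1,
    outer_node_relation h12 h11 h22 h21 (by rwa [add_comm]) hαβ₂ (by linear_combination hκ)
      (hP₁.trans (normalizedMean_comm ..)) (hP₂.trans (normalizedMean_comm ..)) hQ₂ h3, ?_, ?_⟩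
  · rw [dotProduct_comm, hQ₁]
    exact dotProduct_normalizedMean hαβ₁ h11' h21'
  · rw [dotProduct_comm, hQ₂]
    exact dotProduct_normalizedMean hαβ₂ h12' h22'
  · rw [dotProduct_comm Q₁, dotProduct_comm Q₂]
    exact outer_node_relation h11' h21' h12' h22' hαβ₁ hαα (by linear_combination hκ) hQ₁ hQ₂ hP₁
      (by rwa [dotProduct_comm])
  · rw [dotProduct_comm Q₁, dotProduct_comm Q₂]
    exact outer_node_relation h21' h11' h22' h12' (by rwa [add_comm]) hββ (by linear_combination hκ)
      (hQ₁.trans (normalizedMean_comm ..)) (hQ₂.trans (normalizedMean_comm ..)) hP₂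
      (by rwa [dotProduct_comm])

/-- Face Lemma with the cyclic condition `α₁+α₂+β₁+β₂ = 0`: the cube closes
with `α₄ = −β₂`, `α₅ = −β₁`, `β₄ = −α₂`, `β₅ = −α₁`, i.e. all four outer node
triple relations hold. -/
theorem face_lemma_cyclic_cube (n : ℕ) (p₁ p₂ q₁ q₂ : Fin n → ℂ)
    (hp : LinearIndependent ℂ ![p₁, p₂]) (hq : LinearIndependent ℂ ![q₁, q₂])
    (h11 : q₁ ⬝ᵥ p₁ ≠ 0) (h12 : q₁ ⬝ᵥ p₂ ≠ 0)
    (h21 : q₂ ⬝ᵥ p₁ ≠ 0) (h22 : q₂ ⬝ᵥ p₂ ≠ 0)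
    (α₁ α₂ β₁ β₂ : ℂ) (ha₁ : α₁ ≠ 0) (ha₂ : α₂ ≠ 0) (hb₁ : β₁ ≠ 0) (hb₂ : β₂ ≠ 0)
    (hαα : α₁ + α₂ ≠ 0) (hββ : β₁ + β₂ ≠ 0)
    (hαβ₁ : α₁ + β₁ ≠ 0) (hαβ₂ : α₂ + β₂ ≠ 0)
    (hκ : α₁ + α₂ + β₁ + β₂ = 0)
    (P₁ P₂ Q₁ Q₂ : Fin n → ℂ)
    (hP₁ : P₁ = (α₁ + α₂)⁻¹ •
        (α₁ • ((q₁ ⬝ᵥ p₁)⁻¹ • p₁) + α₂ • ((q₁ ⬝ᵥ p₂)⁻¹ • p₂)))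
    (hP₂ : P₂ = (β₁ + β₂)⁻¹ •
        (β₁ • ((q₂ ⬝ᵥ p₁)⁻¹ • p₁) + β₂ • ((q₂ ⬝ᵥ p₂)⁻¹ • p₂)))
    (hQ₁ : Q₁ = (α₁ + β₁)⁻¹ •
        (α₁ • ((q₁ ⬝ᵥ p₁)⁻¹ • q₁) + β₁ • ((q₂ ⬝ᵥ p₁)⁻¹ • q₂)))
    (hQ₂ : Q₂ = (α₂ + β₂)⁻¹ •
        (α₂ • ((q₁ ⬝ᵥ p₂)⁻¹ • q₁) + β₂ • ((q₂ ⬝ᵥ p₂)⁻¹ • q₂)))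
    (h1 : Q₁ ⬝ᵥ P₁ ≠ 0) (h2 : Q₁ ⬝ᵥ P₂ ≠ 0)
    (h3 : Q₂ ⬝ᵥ P₁ ≠ 0) (h4 : Q₂ ⬝ᵥ P₂ ≠ 0) :
    Q₁ ⬝ᵥ p₁ = 1 ∧ Q₂ ⬝ᵥ p₂ = 1 ∧ q₁ ⬝ᵥ P₁ = 1 ∧ q₂ ⬝ᵥ P₂ = 1 ∧
    (-β₂) • ((Q₁ ⬝ᵥ P₁)⁻¹ • P₁) + (-α₂) • ((Q₁ ⬝ᵥ P₂)⁻¹ • P₂) -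
      (α₁ + β₁) • p₁ = 0 ∧
    (-β₁) • ((Q₂ ⬝ᵥ P₁)⁻¹ • P₁) + (-α₁) • ((Q₂ ⬝ᵥ P₂)⁻¹ • P₂) -
      (α₂ + β₂) • p₂ = 0 ∧
    (-β₂) • ((Q₁ ⬝ᵥ P₁)⁻¹ • Q₁) + (-β₁) • ((Q₂ ⬝ᵥ P₁)⁻¹ • Q₂) -
      (α₁ + α₂) • q₁ = 0 ∧
    (-α₂) • ((Q₁ ⬝ᵥ P₂)⁻¹ • Q₁) + (-α₁) • ((Q₂ ⬝ᵥ P₂)⁻¹ • Q₂) -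
      (β₁ + β₂) • q₂ = 0 :=
  face_lemma_cyclic_cube_general n p₁ p₂ q₁ q₂ h11 h12 h21 h22 α₁ α₂ β₁ β₂ hαα hββ hαβ₁ hαβ₂ hκ P₁
    P₂ Q₁ Q₂ hP₁ hP₂ hQ₁ hQ₂ h1 h2 h3
end
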